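/- arXiv:1603.09309 — 7 statements merged into one kernel-verified Lean document; each statement's English description precedes it below -/
import Mathlib

section
/- Fix 0 < r < 1 and points p_1, …, p_e ∈ 𝔸_r (e ≥ 2, not necessarily distinct). Then there exist an integer M = M(r) > 0 and a constant c = c(r) > 0 such that for every N ≥ M and every z in the closed annulus Ā_r = {r ≤ |z| ≤ 1}, one has |B_N(z)·B_{−N}(z) − 1| ≤ c·r^{2N}. -/
open Finset Complex

/-- The Blaschke-type factor `B_j` associated to `r ∈ (0,1)` and points
`p 1, …, p e` of the annulus `𝔸_r`:
`B_j(z) = (∏ₖ (1 − conj(pₖ) r^{2j})/(1 − pₖ r^{2j})) · ∏ₖ (z − pₖ r^{2j})/(1 − conj(pₖ) r^{2j} z)`. -/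
noncomputable def annulusBlaschkeFactor (r : ℝ) {e : ℕ} (p : Fin e → ℂ) (j : ℤ)
    (z : ℂ) : ℂ :=
  (∏ k, (1 - (starRingEnd ℂ) (p k) * (r : ℂ) ^ (2 * j)) /
      (1 - p k * (r : ℂ) ^ (2 * j))) *
    ∏ k, (z - p k * (r : ℂ) ^ (2 * j)) /
      (1 - (starRingEnd ℂ) (p k) * (r : ℂ) ^ (2 * j) * z)

/-!
Put `t = r ^ (2 * N)`. Then `B_N(z) B_{-N}(z)` is the product over `k` of `b(p k, t) b(p k, t⁻¹)`,
where `b(p, t)` is the single-point factor `blaschkeTerm p t z`. Pulling the leading coefficients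
out of the `t⁻¹` factor turns `b(p, t) b(p, t⁻¹)` into a product of four Möbius ratios
`(1 - a t) / (1 - b t)` whose coefficients `a, b` are built from `p`, `conj p`, `z` and their
inverses, hence bounded by `r⁻²` on the closed annulus. Each ratio is `1 + O(t / r²)`, and a
product of `n` numbers within `d` of `1` is within `2 n d` of `1` as soon as `n d ≤ 1`
(compare with `exp (n d) - 1`). This gives the bound with `c = 64 (e + 1) / r²`.
-/

open ComplexConjugate

noncomputable def blaschkeTerm (p t z : ℂ) : ℂ :=
  (1 - conj p * t) / (1 - p * t) * ((z - p * t) / (1 - conj p * t * z))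

theorem annulusBlaschkeFactor_eq_prod (r : ℝ) {e : ℕ} (p : Fin e → ℂ) (j : ℤ) (z : ℂ) :
    annulusBlaschkeFactor r p j z = ∏ k, blaschkeTerm (p k) ((r : ℂ) ^ (2 * j)) z :=
  prod_mul_distrib.symm

theorem Finset.norm_prod_sub_one_le {ι R : Type*} [NormedCommRing R] [NormOneClass R]
    (s : Finset ι) (f : ι → R) {d : ℝ} (hf : ∀ i ∈ s, ‖f i - 1‖ ≤ d) (hd : #s * d ≤ 1) :
    ‖∏ i ∈ s, f i - 1‖ ≤ 2 * (#s * d) := by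
  have hsum : ∑ i ∈ s, ‖f i - 1‖ ≤ #s * d := by
    simpa using Finset.sum_le_sum hf
  have hsum0 : 0 ≤ ∑ i ∈ s, ‖f i - 1‖ := by positivity
  calc ‖∏ i ∈ s, f i - 1‖ = ‖∏ i ∈ s, (1 + (f i - 1)) - 1‖ := by simp
    _ ≤ Real.exp (∑ i ∈ s, ‖f i - 1‖) - 1 := s.norm_prod_one_add_sub_one_le _
    _ ≤ Real.exp (#s * d) - 1 := by gcongr
    _ ≤ |Real.exp (#s * d) - 1| := le_abs_self _
    _ ≤ 2 * |#s * d| := Real.abs_exp_sub_one_le (abs_le.2 ⟨by linarith, hd⟩)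
    _ = 2 * (#s * d) := by rw [abs_of_nonneg (by linarith)]

section MobiusRatio

variable {a b t : ℂ} {K : ℝ}

theorem half_le_norm_one_sub_mul (hb : ‖b‖ ≤ K) (ht : 2 * K * ‖t‖ ≤ 1) :
    1 / 2 ≤ ‖1 - b * t‖ := by
  have hbt : ‖b * t‖ ≤ 1 / 2 := by
    rw [norm_mul]; nlinarith [norm_nonneg t]
  have := norm_sub_norm_le (1 : ℂ) (b * t)
  rw [norm_one] at this
  linarith

theorem norm_one_sub_mul_div_one_sub_mul_sub_one_le (ha : ‖a‖ ≤ K) (hb : ‖b‖ ≤ K)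
    (ht : 2 * K * ‖t‖ ≤ 1) :
    ‖(1 - a * t) / (1 - b * t) - 1‖ ≤ 4 * K * ‖t‖ := by
  have hden := half_le_norm_one_sub_mul hb ht
  have hnum : ‖(b - a) * t‖ ≤ 2 * K * ‖t‖ := by
    rw [norm_mul]
    gcongr
    linarith [norm_sub_le b a]
  calc ‖(1 - a * t) / (1 - b * t) - 1‖ = ‖(b - a) * t‖ / ‖1 - b * t‖ := by
        rw [div_sub_one (norm_pos_iff.1 (by linarith)), norm_div]
        congr 2
        ring
    _ ≤ 2 * K * ‖t‖ / (1 / 2) := by gcongr; exact (norm_nonneg _).trans hnum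
    _ = 4 * K * ‖t‖ := by ring

end MobiusRatio

noncomputable def blaschkeTermNumCoeff (p z : ℂ) : Fin 4 → ℂ :=
  ![conj p, p / z, (conj p)⁻¹, z / p]

noncomputable def blaschkeTermDenCoeff (p z : ℂ) : Fin 4 → ℂ :=
  ![p, conj p * z, p⁻¹, (conj p * z)⁻¹]

theorem blaschkeTerm_mul_blaschkeTerm_inv {p z t : ℂ} (hp : p ≠ 0) (hz : z ≠ 0) (ht : t ≠ 0)
    (hden : ∀ i, 1 - blaschkeTermDenCoeff p z i * t ≠ 0) :
    blaschkeTerm p t z * blaschkeTerm p t⁻¹ z =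
      ∏ i, (1 - blaschkeTermNumCoeff p z i * t) / (1 - blaschkeTermDenCoeff p z i * t) := by
  have hq : conj p ≠ 0 := (map_ne_zero _).2 hp
  have h0 := hden 0
  have h1 := hden 1
  have h2 := hden 2
  have h3 := hden 3
  simp only [blaschkeTermDenCoeff, Matrix.cons_val] at h0 h1 h2 h3
  have h1' : 1 - conj p * t * z ≠ 0 := by rwa [mul_right_comm]
  have h2' : 1 - p * t⁻¹ ≠ 0 := by
    rw [show 1 - p * t⁻¹ = -(p * t⁻¹) * (1 - p⁻¹ * t) by field_simp; ring]
    exact mul_ne_zero (by simp [hp, ht]) h2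
  have h3' : 1 - conj p * t⁻¹ * z ≠ 0 := by
    rw [show 1 - conj p * t⁻¹ * z = -(conj p * z * t⁻¹) * (1 - (conj p * z)⁻¹ * t) by
      field_simp; ring]
    exact mul_ne_zero (by simp [hq, hz, ht]) h3
  simp only [blaschkeTerm, blaschkeTermNumCoeff, blaschkeTermDenCoeff, Fin.prod_univ_four,
    Matrix.cons_val]
  -- Normalising the `t⁻¹`-factors produces the prefactors `conj p / p` and `p / (conj p * z)`,
  -- which cancel against the factor `z` extracted from `z - p * t`.
  field_simp
  ring

theorem norm_blaschkeTermCoeff_le {r : ℝ} {p z : ℂ} (hr : 0 < r) (hpr : r ≤ ‖p‖)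
    (hp1 : ‖p‖ ≤ 1) (hzr : r ≤ ‖z‖) (hz1 : ‖z‖ ≤ 1) (i : Fin 4) :
    ‖blaschkeTermNumCoeff p z i‖ ≤ r⁻¹ ^ 2 ∧ ‖blaschkeTermDenCoeff p z i‖ ≤ r⁻¹ ^ 2 := by
  have h1 : 1 ≤ r⁻¹ := one_le_inv₀ hr |>.2 (hpr.trans hp1)
  have hp_inv : ‖p‖⁻¹ ≤ r⁻¹ := inv_anti₀ hr hpr
  have hz_inv : ‖z‖⁻¹ ≤ r⁻¹ := inv_anti₀ hr hzr
  have hp' : ‖p‖ ≤ r⁻¹ := hp1.trans h1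
  have hz' : ‖z‖ ≤ r⁻¹ := hz1.trans h1
  rw [sq]
  fin_cases i <;>
    simp only [blaschkeTermNumCoeff, blaschkeTermDenCoeff, Fin.zero_eta, Fin.mk_one,
      Fin.reduceFinMk, Matrix.cons_val, norm_mul, norm_inv, mul_inv, Complex.norm_conj,
      div_eq_mul_inv] <;>
    refine ⟨?_, ?_⟩
  all_goals first
    | exact (le_mul_of_one_le_right (by positivity) h1).trans' ‹_›
    | exact mul_le_mul ‹_› ‹_› (by positivity) (by positivity)

theorem norm_blaschkeTerm_mul_blaschkeTerm_inv_sub_one_le {r : ℝ} {p z t : ℂ} (hr : 0 < r)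
    (hpr : r ≤ ‖p‖) (hp1 : ‖p‖ ≤ 1) (hzr : r ≤ ‖z‖) (hz1 : ‖z‖ ≤ 1) (ht0 : t ≠ 0)
    (ht : 16 * r⁻¹ ^ 2 * ‖t‖ ≤ 1) :
    ‖blaschkeTerm p t z * blaschkeTerm p t⁻¹ z - 1‖ ≤ 32 * r⁻¹ ^ 2 * ‖t‖ := by
  have hK : 2 * r⁻¹ ^ 2 * ‖t‖ ≤ 1 := by nlinarith [norm_nonneg t]
  have hcoeff := norm_blaschkeTermCoeff_le hr hpr hp1 hzr hz1
  have hden i : 1 - blaschkeTermDenCoeff p z i * t ≠ 0 :=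
    norm_pos_iff.1 ((half_le_norm_one_sub_mul (hcoeff i).2 hK).trans_lt' (by norm_num))
  rw [blaschkeTerm_mul_blaschkeTerm_inv (norm_pos_iff.1 (hr.trans_le hpr))
    (norm_pos_iff.1 (hr.trans_le hzr)) ht0 hden]
  calc _ ≤ 2 * (#(univ : Finset (Fin 4)) * (4 * r⁻¹ ^ 2 * ‖t‖)) :=
        norm_prod_sub_one_le _ _ (fun i _ => norm_one_sub_mul_div_one_sub_mul_sub_one_le
          (hcoeff i).1 (hcoeff i).2 hK) (by rw [card_univ, Fintype.card_fin]; push_cast; linarith)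
    _ = 32 * r⁻¹ ^ 2 * ‖t‖ := by rw [card_univ, Fintype.card_fin]; push_cast; ring

theorem annulusBlaschkeFactor_tail_bound_general (r : ℝ) (hr0 : 0 < r) (hr1 : r < 1)
    (e : ℕ) (p : Fin e → ℂ)
    (hp : ∀ k, r < ‖p k‖ ∧ ‖p k‖ < 1) :
    ∃ M : ℕ, 0 < M ∧ ∃ c : ℝ, 0 < c ∧ ∀ N : ℕ, M ≤ N → ∀ z : ℂ,
      r ≤ ‖z‖ → ‖z‖ ≤ 1 →
      ‖annulusBlaschkeFactor r p (N : ℤ) z *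
          annulusBlaschkeFactor r p (-(N : ℤ)) z - 1‖ ≤ c * r ^ (2 * N) := by
  obtain ⟨n, hn⟩ := exists_pow_lt_of_lt_one (show 0 < r ^ 2 / (32 * (e + 1)) by positivity) hr1
  refine ⟨n + 1, n.succ_pos, 64 * (e + 1) * r⁻¹ ^ 2, by positivity, fun N hN z hzr hz1 => ?_⟩
  set t : ℝ := r ^ (2 * N) with ht_def
  have ht0 : 0 < t := by positivity
  have hrt : 0 ≤ r⁻¹ ^ 2 * t := by positivity
  have hsmall : 32 * (e + 1) * (r⁻¹ ^ 2 * t) ≤ 1 := by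
    have := (pow_le_pow_of_le_one hr0.le hr1.le (by omega : n ≤ 2 * N)).trans_lt hn
    rw [lt_div_iff₀ (by positivity)] at this
    rw [inv_pow, inv_mul_eq_div, mul_div_assoc', div_le_one (by positivity)]
    linarith
  have hpow : (r : ℂ) ^ (2 * (N : ℤ)) = (t : ℂ) := by
    rw [ht_def]; push_cast; norm_cast
  have hpair k : ‖blaschkeTerm (p k) t z * blaschkeTerm (p k) (t : ℂ)⁻¹ z - 1‖ ≤
      32 * r⁻¹ ^ 2 * t := by
    simpa only [Complex.norm_real, Real.norm_of_nonneg ht0.le] using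
      norm_blaschkeTerm_mul_blaschkeTerm_inv_sub_one_le hr0 (hp k).1.le (hp k).2.le hzr hz1
        (t := t) (by exact_mod_cast ht0.ne')
        (by rw [Complex.norm_real, Real.norm_of_nonneg ht0.le]; nlinarith)
  rw [annulusBlaschkeFactor_eq_prod, annulusBlaschkeFactor_eq_prod, mul_neg, zpow_neg, hpow,
    ← prod_mul_distrib]
  calc _ ≤ 2 * (#(univ : Finset (Fin e)) * (32 * r⁻¹ ^ 2 * t)) :=
        norm_prod_sub_one_le _ _ (fun k _ => hpair k)
          (by rw [card_univ, Fintype.card_fin]; nlinarith)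
    _ ≤ 64 * (e + 1) * r⁻¹ ^ 2 * t := by rw [card_univ, Fintype.card_fin]; nlinarith

/-- For `0 < r < 1` and points `p₁, …, p_e ∈ 𝔸_r` (`e ≥ 2`),
there are `M = M(r) > 0` and `c = c(r) > 0` so that for all `N ≥ M` and all `z`
in the closed annulus `r ≤ |z| ≤ 1`, one has `|B_N(z)·B_{−N}(z) − 1| ≤ c·r^{2N}`. -/
theorem annulusBlaschkeFactor_tail_bound (r : ℝ) (hr0 : 0 < r) (hr1 : r < 1)
    (e : ℕ) (he : 2 ≤ e) (p : Fin e → ℂ)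
    (hp : ∀ k, r < ‖p k‖ ∧ ‖p k‖ < 1) :
    ∃ M : ℕ, 0 < M ∧ ∃ c : ℝ, 0 < c ∧ ∀ N : ℕ, M ≤ N → ∀ z : ℂ,
      r ≤ ‖z‖ → ‖z‖ ≤ 1 →
      ‖annulusBlaschkeFactor r p (N : ℤ) z *
          annulusBlaschkeFactor r p (-(N : ℤ)) z - 1‖ ≤ c * r ^ (2 * N) :=
  annulusBlaschkeFactor_tail_bound_general r hr0 hr1 e p hp
end

section
/- Fix 0 < r < 1, an integer δ, and points p_1, …, p_e ∈ 𝔸_r with |p_1 p_2 ⋯ p_e| = r^δ. Then the limit function f_∞ is modular with respect to multiplication by r²: for every z ∈ ℂ ∖ {0} at which both sides are defined (i.e., z is not a pole of the infinite products), f_∞(r² z) = f_∞(z). -/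
open Finset Complex Filter

/-- The partial product `f_N(z) = z^{−δ} B₀(z) ∏_{j=1}^N B_j(z) B_{−j}(z)`. -/
noncomputable def annulusPartialProduct (r : ℝ) {e : ℕ} (p : Fin e → ℂ) (δ : ℤ)
    (N : ℕ) (z : ℂ) : ℂ :=
  z ^ (-δ) * annulusBlaschkeFactor r p 0 z *
    ∏ j ∈ Finset.Icc 1 N, (annulusBlaschkeFactor r p (j : ℤ) z *
      annulusBlaschkeFactor r p (-(j : ℤ)) z)

/-!
With `q = r²`, write `B_j(z) = c_j n_j(z) / d_j(z)` where `n_j(z) = ∏ₖ (z - pₖ qʲ)` and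
`d_j(z) = ∏ₖ (1 - p̄ₖ qʲ z)`. Since `n_j(qz) = qᵉ n_{j-1}(z)` and `d_j(qz) = d_{j+1}(z)`, the
products over `|j| ≤ N` telescope to
`f_N(qz) · n_N(z) d_{N+1}(z) = f_N(z) · q^{-δ} q^{e(2N+1)} n_{-N-1}(z) d_{-N}(z)`.
As `N → ∞` both correction factors tend to `zᵉ`, the second one because `|p₁ ⋯ p_e|² = q^δ`,
and cancelling `zᵉ ≠ 0` gives the claim. The identity is kept in multiplied-out form: it then
only needs `d_{N+1}(z) ≠ 0` and `d_{-N}(z) ≠ 0`, which hold for large `N`, and no assumption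
on the zeros or poles of the `B_j`.
-/

open scoped ComplexConjugate Topology

theorem Int.mul_prod_Icc_one_mul_neg {M : Type*} [CommMonoid M] (f : ℤ → M) (N : ℕ) :
    f 0 * ∏ j ∈ Icc 1 N, (f j * f (-j)) = ∏ j ∈ Icc (-N : ℤ) N, f j := by
  induction N with
  | zero => simp
  | succ N ih =>
    have hIcc : Icc (-(N + 1 : ℕ) : ℤ) (N + 1 : ℕ) =
        insert (-(N + 1 : ℤ)) (insert (N + 1 : ℤ) (Icc (-N : ℤ) N)) := by
      ext; simp only [mem_Icc, mem_insert]; omega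
    rw [prod_Icc_succ_top (by omega), ← mul_assoc, ih, hIcc, prod_insert (by simp; omega),
      prod_insert (by simp)]
    push_cast
    ac_rfl

theorem Int.prod_Icc_add_one_mul {M : Type*} [CommMonoid M] (f : ℤ → M) {a b : ℤ}
    (hab : a ≤ b + 1) :
    (∏ j ∈ Icc a b, f (j + 1)) * f a = f (b + 1) * ∏ j ∈ Icc a b, f j := by
  rw [← prod_insert (f := f) (by simp), insert_Icc_right_eq_Icc_add_one hab,
    ← insert_Icc_add_one_left_eq_Icc hab, prod_insert (by simp), mul_comm,
    ← map_add_right_Icc, prod_map]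
  rfl

theorem div_eq_div_of_mul_eq_mul {K : Type*} [Field K] {a b c d : K} (ha : a ≠ 0) (hc : c ≠ 0)
    (h : b * c = a * d) : a / b = c / d := by
  rcases eq_or_ne d 0 with rfl | hd
  · simp_all
  · have hb : b ≠ 0 := by rintro rfl; simp_all
    rw [div_eq_div_iff hb hd, ← h, mul_comm]

variable {e : ℕ}

noncomputable def blaschkeNum (q : ℂ) (p : Fin e → ℂ) (j : ℤ) (z : ℂ) : ℂ :=
  ∏ k, (z - p k * q ^ j)

noncomputable def blaschkeDen (q : ℂ) (p : Fin e → ℂ) (j : ℤ) (z : ℂ) : ℂ :=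
  ∏ k, (1 - conj (p k) * q ^ j * z)

theorem blaschkeNum_q_mul {q : ℂ} (hq : q ≠ 0) (p : Fin e → ℂ) (j : ℤ) (z : ℂ) :
    blaschkeNum q p j (q * z) = q ^ e * blaschkeNum q p (j - 1) z := by
  rw [blaschkeNum, blaschkeNum, ← Fin.prod_const e q, ← prod_mul_distrib]
  refine prod_congr rfl fun k _ => ?_
  rw [zpow_sub_one₀ hq]
  field_simp

theorem blaschkeDen_q_mul {q : ℂ} (hq : q ≠ 0) (p : Fin e → ℂ) (j : ℤ) (z : ℂ) :
    blaschkeDen q p j (q * z) = blaschkeDen q p (j + 1) z := by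
  simp only [blaschkeDen, zpow_add_one₀ hq, mul_assoc]

noncomputable def symmBlaschkeProduct (q : ℂ) (c : ℤ → ℂ) (p : Fin e → ℂ) (δ : ℤ) (N : ℕ)
    (z : ℂ) : ℂ :=
  z ^ (-δ) * ∏ j ∈ Icc (-N : ℤ) N, c j * blaschkeNum q p j z / blaschkeDen q p j z

theorem symmBlaschkeProduct_q_mul_mul {q : ℂ} (hq : q ≠ 0) (c : ℤ → ℂ) (p : Fin e → ℂ)
    (δ : ℤ) (N : ℕ) (z : ℂ) (hN : blaschkeDen q p (N + 1) z ≠ 0)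
    (hN' : blaschkeDen q p (-N) z ≠ 0) :
    symmBlaschkeProduct q c p δ N (q * z) * (blaschkeNum q p N z * blaschkeDen q p (N + 1) z) =
      symmBlaschkeProduct q c p δ N z * (q ^ (-δ) * (q ^ e) ^ (2 * N + 1) *
        blaschkeNum q p (-N - 1) z * blaschkeDen q p (-N) z) := by
  have hle : (-N : ℤ) ≤ N + 1 := by omega
  have hnum := Int.prod_Icc_add_one_mul (fun j => blaschkeNum q p (j - 1) z) hle
  have hden := Int.prod_Icc_add_one_mul (fun j => blaschkeDen q p j z) hle
  simp only [add_sub_cancel_right] at hnum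
  have hratio := div_eq_div_of_mul_eq_mul hN hN' hden
  have hcard : (N + 1 - -N : ℤ).toNat = 2 * N + 1 := by omega
  simp only [symmBlaschkeProduct, blaschkeNum_q_mul hq, blaschkeDen_q_mul hq,
    prod_div_distrib, prod_mul_distrib, prod_const, Int.card_Icc, hcard, mul_zpow]
  set C := ∏ j ∈ Icc (-N : ℤ) N, c j
  set Q := (q ^ e) ^ (2 * N + 1)
  linear_combination -(q ^ (-δ) * z ^ (-δ) * C * Q * blaschkeDen q p (N + 1) z /
      ∏ j ∈ Icc (-N : ℤ) N, blaschkeDen q p (j + 1) z) * hnum +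
    (q ^ (-δ) * z ^ (-δ) * C * Q * blaschkeNum q p (-N - 1) z *
      ∏ j ∈ Icc (-N : ℤ) N, blaschkeNum q p j z) * hratio

section Limits

variable {q : ℂ} (p : Fin e → ℂ) (z : ℂ)

theorem pow_mul_blaschkeNum_neg (hq : q ≠ 0) (n : ℕ) :
    (q ^ n) ^ e * blaschkeNum q p (-n) z = ∏ k, (q ^ n * z - p k) := by
  rw [blaschkeNum, ← Fin.prod_const e, ← prod_mul_distrib]
  refine prod_congr rfl fun k _ => ?_
  rw [zpow_neg, zpow_natCast]
  field_simp

theorem pow_mul_blaschkeDen_neg (hq : q ≠ 0) (n : ℕ) :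
    (q ^ n) ^ e * blaschkeDen q p (-n) z = ∏ k, (q ^ n - conj (p k) * z) := by
  rw [blaschkeDen, ← Fin.prod_const e, ← prod_mul_distrib]
  refine prod_congr rfl fun k _ => ?_
  rw [zpow_neg, zpow_natCast]
  field_simp

theorem tendsto_blaschkeNum_mul_blaschkeDen (hq : ‖q‖ < 1) :
    Tendsto (fun N : ℕ => blaschkeNum q p N z * blaschkeDen q p (N + 1) z) atTop
      (𝓝 (z ^ e)) := by
  have hF : Continuous fun t : ℂ =>
      (∏ k, (z - p k * t)) * ∏ k, (1 - conj (p k) * (t * q) * z) := by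
    fun_prop
  convert (hF.tendsto 0).comp (tendsto_pow_atTop_nhds_zero_of_norm_lt_one hq) using 1
  · ext N
    rw [Function.comp_apply, blaschkeNum, blaschkeDen, ← Nat.cast_succ]
    simp only [zpow_natCast, pow_succ]
  · simp

theorem tendsto_blaschkeNum_neg_mul_blaschkeDen_neg (hq0 : q ≠ 0) (hq : ‖q‖ < 1) {δ : ℤ}
    (hp : (∏ k, p k) * conj (∏ k, p k) = q ^ δ) :
    Tendsto (fun N : ℕ => q ^ (-δ) * (q ^ e) ^ (2 * N + 1) * blaschkeNum q p (-N - 1) z *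
      blaschkeDen q p (-N) z) atTop (𝓝 (z ^ e)) := by
  have hF : Continuous fun t : ℂ =>
      q ^ (-δ) * (∏ k, (t * q * z - p k)) * ∏ k, (t - conj (p k) * z) := by
    fun_prop
  convert (hF.tendsto 0).comp (tendsto_pow_atTop_nhds_zero_of_norm_lt_one hq) using 1
  · ext N
    have hnum := pow_mul_blaschkeNum_neg p z hq0 (N + 1)
    have hden := pow_mul_blaschkeDen_neg p z hq0 N
    rw [Nat.cast_succ, neg_add', pow_succ] at hnum
    rw [Function.comp_apply, mul_assoc _ (∏ k, _), ← hnum, ← hden]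
    ring
  · have hprod : (∏ k, -p k) * ∏ k, -(conj (p k) * z) = (∏ k, p k) * conj (∏ k, p k) * z ^ e := by
      rw [← prod_mul_distrib, map_prod, ← prod_mul_distrib, ← Fin.prod_const e z,
        ← prod_mul_distrib]
      exact prod_congr rfl fun k _ => by ring
    simp only [zero_mul, zero_sub, mul_assoc, hprod, hp]
    rw [zpow_neg, inv_mul_cancel_left₀ (zpow_ne_zero δ hq0)]

end Limits

theorem eq_of_tendsto_symmBlaschkeProduct {q : ℂ} (hq0 : q ≠ 0) (hq : ‖q‖ < 1) (c : ℤ → ℂ)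
    {p : Fin e → ℂ} {δ : ℤ} (hp : (∏ k, p k) * conj (∏ k, p k) = q ^ δ) {z w₁ w₂ : ℂ}
    (hz : z ≠ 0) (h₁ : Tendsto (fun N => symmBlaschkeProduct q c p δ N (q * z)) atTop (𝓝 w₁))
    (h₂ : Tendsto (fun N => symmBlaschkeProduct q c p δ N z) atTop (𝓝 w₂)) : w₁ = w₂ := by
  have hze : z ^ e ≠ 0 := pow_ne_zero e hz
  have hX := tendsto_blaschkeNum_mul_blaschkeDen p z hq
  have hY := tendsto_blaschkeNum_neg_mul_blaschkeDen_neg p z hq0 hq hp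
  have hident : ∀ᶠ N in atTop,
      symmBlaschkeProduct q c p δ N z *
          (q ^ (-δ) * (q ^ e) ^ (2 * N + 1) * blaschkeNum q p (-N - 1) z * blaschkeDen q p (-N) z) =
        symmBlaschkeProduct q c p δ N (q * z) *
          (blaschkeNum q p N z * blaschkeDen q p (N + 1) z) := by
    filter_upwards [hX.eventually_ne hze, hY.eventually_ne hze] with N hXN hYN
    exact (symmBlaschkeProduct_q_mul_mul hq0 c p δ N z (right_ne_zero_of_mul hXN)
      (right_ne_zero_of_mul hYN)).symm
  exact mul_right_cancel₀ hze (tendsto_nhds_unique (h₁.mul hX) ((h₂.mul hY).congr' hident))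

theorem annulusPartialProduct_eq_symmBlaschkeProduct (r : ℝ) (p : Fin e → ℂ) (δ : ℤ) (N : ℕ)
    (z : ℂ) : annulusPartialProduct r p δ N z = symmBlaschkeProduct ((r : ℂ) ^ 2)
      (fun j => ∏ k, (1 - conj (p k) * (r : ℂ) ^ (2 * j)) / (1 - p k * (r : ℂ) ^ (2 * j)))
      p δ N z := by
  have hpow (j : ℤ) : ((r : ℂ) ^ 2) ^ j = (r : ℂ) ^ (2 * j) := by
    rw [zpow_mul]
    norm_cast
  rw [annulusPartialProduct, mul_assoc,
    Int.mul_prod_Icc_one_mul_neg (fun j => annulusBlaschkeFactor r p j z)]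
  simp only [symmBlaschkeProduct, annulusBlaschkeFactor, blaschkeNum, blaschkeDen, hpow,
    prod_div_distrib, mul_div_assoc]

theorem annulusInfiniteProduct_modular_general (r : ℝ) (hr0 : 0 < r) (hr1 : r < 1)
    (e : ℕ) (p : Fin e → ℂ) (δ : ℤ)
    (hprod : ‖∏ k, p k‖ = r ^ δ) :
    ∀ z : ℂ, z ≠ 0 → ∀ w₁ w₂ : ℂ,
      Tendsto (fun N => annulusPartialProduct r p δ N ((r : ℂ) ^ 2 * z)) atTop (nhds w₁) →
      Tendsto (fun N => annulusPartialProduct r p δ N z) atTop (nhds w₂) →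
      w₁ = w₂ := by
  intro z hz w₁ w₂ h₁ h₂
  simp only [annulusPartialProduct_eq_symmBlaschkeProduct] at h₁ h₂
  refine eq_of_tendsto_symmBlaschkeProduct (by simpa using hr0.ne') ?_ _ ?_ hz h₁ h₂
  · rw [norm_pow, norm_real, Real.norm_of_nonneg hr0.le]
    exact pow_lt_one₀ hr0.le hr1 two_ne_zero
  · rw [mul_conj, normSq_eq_norm_sq, hprod]
    push_cast
    rw [← zpow_natCast, ← zpow_natCast, ← zpow_mul, ← zpow_mul, mul_comm]

/-- Suppose `0 < r < 1`, `δ ∈ ℤ`, `p₁, …, p_e ∈ 𝔸_r`, and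
`|p₁ ⋯ p_e| = r^δ`.  Then the limit `f_∞` of the partial products is modular
under multiplication by `r²`: for every `z ≠ 0` at which both `f_∞(r² z)` and
`f_∞(z)` are defined (i.e. the limits of the partial products exist there),
these two values coincide. -/
theorem annulusInfiniteProduct_modular (r : ℝ) (hr0 : 0 < r) (hr1 : r < 1)
    (e : ℕ) (p : Fin e → ℂ)
    (hp : ∀ k, r < ‖p k‖ ∧ ‖p k‖ < 1) (δ : ℤ)
    (hprod : ‖∏ k, p k‖ = r ^ δ) :
    ∀ z : ℂ, z ≠ 0 → ∀ w₁ w₂ : ℂ,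
      Tendsto (fun N => annulusPartialProduct r p δ N ((r : ℂ) ^ 2 * z)) atTop (nhds w₁) →
      Tendsto (fun N => annulusPartialProduct r p δ N z) atTop (nhds w₂) →
      w₁ = w₂ :=
  annulusInfiniteProduct_modular_general r hr0 hr1 e p δ hprod
end

section
/- Let 0 < r < 1 and let f_1, f_2 : 𝔸_r → 𝔻 be proper holomorphic maps that extend continuously to the closed annulus Ā_r = {r ≤ |z| ≤ 1}. Suppose that f_1 and f_2 have the same order of vanishing at every point of 𝔸_r (i.e., the same zeros counted with multiplicity), and that f_1(1) = f_2(1) = 1. Then f_1 = f_2 on 𝔸_r. -/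
/-!
Since `f₁` and `f₂` vanish to the same order everywhere, the singularities of `f₁ / f₂` are
removable: its meromorphic normal form `g` is holomorphic and zero-free on the annulus.
Properness pushes `‖fᵢ‖` to `1` at the boundary, so `‖g‖ = 1` there; the maximum modulus principle
for `g` and `1 / g` gives `‖g‖ = 1` on the whole annulus, hence `g` is constant, equal to
`g 1 = 1`.
-/

open Complex Set Filter Topology Metric Bornology

theorem isPreconnected_norm_preimage_Ioo {E : Type*} [NormedAddCommGroup E] [NormedSpace ℝ E]
    (hE : 1 < Module.rank ℝ E) {r R : ℝ} (hr : 0 ≤ r) :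
    IsPreconnected (norm ⁻¹' Ioo r R : Set E) := by
  have hpolar : (norm ⁻¹' Ioo r R : Set E) =
      (fun p : ℝ × E => p.1 • p.2) '' (Ioo r R ×ˢ sphere 0 1) := by
    ext z
    constructor
    · intro hz
      have hz0 : ‖z‖ ≠ 0 := (hr.trans_lt hz.1).ne'
      refine ⟨(‖z‖, ‖z‖⁻¹ • z), ⟨hz, ?_⟩, smul_inv_smul₀ hz0 z⟩
      simp [norm_smul, hz0]
    · rintro ⟨⟨ρ, u⟩, ⟨hρ, hu⟩, rfl⟩
      rw [mem_sphere_zero_iff_norm] at hu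
      simpa [norm_smul, hu, abs_of_pos (hr.trans_lt hρ.1)] using hρ
  rw [hpolar]
  exact (isPreconnected_Ioo.prod (isPreconnected_sphere hE 0 1)).image _
    (continuous_fst.smul continuous_snd).continuousOn

theorem norm_eq_one_of_mem_closure_of_notMem {X E : Type*} [TopologicalSpace X] [T2Space X]
    [NormedAddCommGroup E] [ProperSpace E] {U : Set X} {f : X → E}
    (hc : ContinuousOn f (closure U)) (hU : ∀ z ∈ U, ‖f z‖ < 1)
    (hproper : ∀ K ⊆ ball (0 : E) 1, IsCompact K → IsCompact (U ∩ f ⁻¹' K))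
    {x : X} (hx : x ∈ closure U) (hxU : x ∉ U) : ‖f x‖ = 1 := by
  have : (𝓝[U] x).NeBot := mem_closure_iff_nhdsWithin_neBot.1 hx
  have hlim : Tendsto (fun z => ‖f z‖) (𝓝[U] x) (𝓝 ‖f x‖) :=
    ((hc x hx).mono subset_closure).norm
  have hle : ‖f x‖ ≤ 1 :=
    le_of_tendsto hlim (eventually_nhdsWithin_of_forall fun z hz => (hU z hz).le)
  -- If `‖f x‖ < b < 1`, then `x` lies in the closed set `U ∩ f ⁻¹' closedBall 0 b ⊆ U`.
  refine hle.antisymm (not_lt.1 fun hlt => hxU ?_)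
  obtain ⟨b, hxb, hb1⟩ := exists_between hlt
  have hK := (hproper _ (closedBall_subset_ball hb1) (isCompact_closedBall 0 b)).isClosed
  refine (hK.mem_of_tendsto (tendsto_id.mono_left (nhdsWithin_le_nhds (s := U))) ?_).1
  filter_upwards [self_mem_nhdsWithin, hlim.eventually (gt_mem_nhds hxb)] with z hzU hzb
  exact ⟨hzU, mem_closedBall_zero_iff.2 hzb.le⟩

section QuotientNormalForm

variable {𝕜 : Type*} [NontriviallyNormedField 𝕜] {U : Set 𝕜} {f₁ f₂ : 𝕜 → 𝕜} {z : 𝕜}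

theorem toMeromorphicNFOn_div_eq_div (hf₁ : AnalyticOnNhd 𝕜 f₁ U) (hf₂ : AnalyticOnNhd 𝕜 f₂ U)
    (hz : f₂ z ≠ 0) : toMeromorphicNFOn (f₁ / f₂) U z = f₁ z / f₂ z := by
  have hmero : MeromorphicOn (f₁ / f₂) U := hf₁.meromorphicOn.div hf₂.meromorphicOn
  by_cases hzU : z ∈ U
  · rw [toMeromorphicNFOn_eq_toMeromorphicNFAt hmero hzU,
      toMeromorphicNFAt_eq_self.2 (((hf₁ z hzU).div (hf₂ z hzU) hz).meromorphicNFAt), Pi.div_apply]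
  · exact toMeromorphicNFOn_eq_self_on_compl hmero hzU

theorem meromorphicOrderAt_toMeromorphicNFOn_div (hf₁ : AnalyticOnNhd 𝕜 f₁ U)
    (hf₂ : AnalyticOnNhd 𝕜 f₂ U) (hz : z ∈ U)
    (horder : analyticOrderAt f₁ z = analyticOrderAt f₂ z) (hfin : analyticOrderAt f₂ z ≠ ⊤) :
    meromorphicOrderAt (toMeromorphicNFOn (f₁ / f₂) U) z = 0 := by
  rw [meromorphicOrderAt_toMeromorphicNFOn (hf₁.meromorphicOn.div hf₂.meromorphicOn) hz,
    meromorphicOrderAt_div (hf₁ z hz).meromorphicAt (hf₂ z hz).meromorphicAt,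
    (hf₁ z hz).meromorphicOrderAt_eq, (hf₂ z hz).meromorphicOrderAt_eq, horder]
  lift analyticOrderAt f₂ z to ℕ using hfin with n
  simp

theorem analyticAt_toMeromorphicNFOn_div (hf₁ : AnalyticOnNhd 𝕜 f₁ U)
    (hf₂ : AnalyticOnNhd 𝕜 f₂ U) (hz : z ∈ U)
    (horder : analyticOrderAt f₁ z = analyticOrderAt f₂ z) (hfin : analyticOrderAt f₂ z ≠ ⊤) :
    AnalyticAt 𝕜 (toMeromorphicNFOn (f₁ / f₂) U) z :=
  (meromorphicNFOn_toMeromorphicNFOn _ U hz).meromorphicOrderAt_nonneg_iff_analyticAt.1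
    (meromorphicOrderAt_toMeromorphicNFOn_div hf₁ hf₂ hz horder hfin).ge

theorem toMeromorphicNFOn_div_ne_zero (hf₁ : AnalyticOnNhd 𝕜 f₁ U)
    (hf₂ : AnalyticOnNhd 𝕜 f₂ U) (hz : z ∈ U)
    (horder : analyticOrderAt f₁ z = analyticOrderAt f₂ z) (hfin : analyticOrderAt f₂ z ≠ ⊤) :
    toMeromorphicNFOn (f₁ / f₂) U z ≠ 0 :=
  (meromorphicNFOn_toMeromorphicNFOn _ U hz).meromorphicOrderAt_eq_zero_iff.1
    (meromorphicOrderAt_toMeromorphicNFOn_div hf₁ hf₂ hz horder hfin)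

theorem eq_toMeromorphicNFOn_div_mul (hf₁ : AnalyticOnNhd 𝕜 f₁ U)
    (hf₂ : AnalyticOnNhd 𝕜 f₂ U) (hz : z ∈ U)
    (horder : analyticOrderAt f₁ z = analyticOrderAt f₂ z) :
    f₁ z = toMeromorphicNFOn (f₁ / f₂) U z * f₂ z := by
  by_cases h₂ : f₂ z = 0
  · rw [h₂, mul_zero, ← (hf₁ z hz).analyticOrderAt_ne_zero, horder,
      (hf₂ z hz).analyticOrderAt_ne_zero]
    exact h₂
  · rw [toMeromorphicNFOn_div_eq_div hf₁ hf₂ h₂, div_mul_cancel₀ _ h₂]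

theorem continuousWithinAt_toMeromorphicNFOn_div {s : Set 𝕜} (hf₁ : AnalyticOnNhd 𝕜 f₁ U)
    (hf₂ : AnalyticOnNhd 𝕜 f₂ U) (hc₁ : ContinuousWithinAt f₁ s z)
    (hc₂ : ContinuousWithinAt f₂ s z) (hz : f₂ z ≠ 0) :
    ContinuousWithinAt (toMeromorphicNFOn (f₁ / f₂) U) s z := by
  refine (hc₁.div hc₂ hz).congr_of_eventuallyEq ?_ (toMeromorphicNFOn_div_eq_div hf₁ hf₂ hz)
  filter_upwards [hc₂.eventually_ne hz] with w hw
  exact toMeromorphicNFOn_div_eq_div hf₁ hf₂ hw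

end QuotientNormalForm

namespace Complex

variable {E : Type*} [NormedAddCommGroup E] [NormedSpace ℂ E] [Nontrivial E]
  {U : Set E} {g : E → ℂ}

theorem norm_eq_one_of_forall_mem_frontier_norm_eq_one (hU : IsBounded U)
    (hg : DiffContOnCl ℂ g U) (hg0 : ∀ z ∈ closure U, g z ≠ 0)
    (hfr : ∀ z ∈ frontier U, ‖g z‖ = 1) {z : E} (hz : z ∈ closure U) : ‖g z‖ = 1 := by
  have hle := norm_le_of_forall_mem_frontier_norm_le hU hg (fun w hw => (hfr w hw).le) hz
  have hinv := norm_le_of_forall_mem_frontier_norm_le hU (hg.inv hg0)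
    (fun w hw => by rw [Pi.inv_apply, norm_inv, hfr w hw, inv_one]) hz
  rw [Pi.inv_apply, norm_inv, inv_le_one₀ (norm_pos_iff.2 (hg0 z hz))] at hinv
  exact hle.antisymm hinv

theorem eq_of_forall_mem_frontier_norm_eq_one (hUb : IsBounded U) (hUo : IsOpen U)
    (hUc : IsPreconnected U) (hg : DiffContOnCl ℂ g U) (hg0 : ∀ z ∈ closure U, g z ≠ 0)
    (hfr : ∀ z ∈ frontier U, ‖g z‖ = 1) {x y : E} (hx : x ∈ closure U) (hy : y ∈ closure U) :
    g x = g y := by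
  obtain ⟨c, hc⟩ := closure_nonempty_iff.1 ⟨x, hx⟩
  have hnorm : ∀ z ∈ closure U, ‖g z‖ = 1 := fun z hz =>
    norm_eq_one_of_forall_mem_frontier_norm_eq_one hUb hg hg0 hfr hz
  have hmax : IsMaxOn (norm ∘ g) U c := fun z hz => by
    simp [hnorm z (subset_closure hz), hnorm c (subset_closure hc)]
  have hconst := eqOn_closure_of_isPreconnected_of_isMaxOn_norm hUc hUo hg hc hmax
  exact (hconst hx).trans (hconst hy).symm

theorem eqOn_of_analyticOrderAt_eq_of_norm_eq_one_on_frontier {U : Set ℂ} {f₁ f₂ : ℂ → ℂ}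
    (hUb : IsBounded U) (hUo : IsOpen U) (hUc : IsPreconnected U)
    (hf₁ : AnalyticOnNhd ℂ f₁ U) (hf₂ : AnalyticOnNhd ℂ f₂ U)
    (hc₁ : ContinuousOn f₁ (closure U)) (hc₂ : ContinuousOn f₂ (closure U))
    (hb₁ : ∀ z ∈ frontier U, ‖f₁ z‖ = 1) (hb₂ : ∀ z ∈ frontier U, ‖f₂ z‖ = 1)
    (horder : ∀ z ∈ U, analyticOrderAt f₁ z = analyticOrderAt f₂ z)
    {x : ℂ} (hx : x ∈ frontier U) (hx₁₂ : f₁ x = f₂ x) : EqOn f₁ f₂ U := by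
  have hb₂0 : ∀ z ∈ frontier U, f₂ z ≠ 0 := fun z hz =>
    norm_ne_zero_iff.1 (by rw [hb₂ z hz]; exact one_ne_zero)
  have hfin : ∀ z ∈ U, analyticOrderAt f₂ z ≠ ⊤ := fun z hz htop => by
    have hzero : EqOn f₂ 0 U :=
      hf₂.eqOn_zero_of_preconnected_of_eventuallyEq_zero hUc hz (analyticOrderAt_eq_top.1 htop)
    exact hb₂0 x hx <| hzero.of_subset_closure hc₂ continuousOn_const subset_closure Subset.rfl
      (frontier_subset_closure hx)
  have hfrontier : ∀ z ∈ closure U, z ∉ U → z ∈ frontier U := fun z hz hzU => by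
    rw [hUo.frontier_eq]; exact ⟨hz, hzU⟩
  set g := toMeromorphicNFOn (f₁ / f₂) U
  have hg_eq : ∀ z ∈ frontier U, g z = f₁ z / f₂ z := fun z hz =>
    toMeromorphicNFOn_div_eq_div hf₁ hf₂ (hb₂0 z hz)
  have hg_frontier : ∀ z ∈ frontier U, ‖g z‖ = 1 := fun z hz => by
    rw [hg_eq z hz, norm_div, hb₁ z hz, hb₂ z hz, div_one]
  have hg_an : ∀ z ∈ U, AnalyticAt ℂ g z := fun z hz =>
    analyticAt_toMeromorphicNFOn_div hf₁ hf₂ hz (horder z hz) (hfin z hz)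
  have hg : DiffContOnCl ℂ g U := by
    refine ⟨fun z hz => (hg_an z hz).differentiableAt.differentiableWithinAt, fun z hz => ?_⟩
    by_cases hzU : z ∈ U
    · exact (hg_an z hzU).continuousAt.continuousWithinAt
    · exact continuousWithinAt_toMeromorphicNFOn_div hf₁ hf₂ (hc₁ z hz) (hc₂ z hz)
        (hb₂0 z (hfrontier z hz hzU))
  have hg0 : ∀ z ∈ closure U, g z ≠ 0 := fun z hz => by
    by_cases hzU : z ∈ U
    · exact toMeromorphicNFOn_div_ne_zero hf₁ hf₂ hzU (horder z hzU) (hfin z hzU)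
    · exact norm_ne_zero_iff.1 (by rw [hg_frontier z (hfrontier z hz hzU)]; exact one_ne_zero)
  have hgx : g x = 1 := by rw [hg_eq x hx, hx₁₂, div_self (hb₂0 x hx)]
  intro z hz
  calc f₁ z = g z * f₂ z := eq_toMeromorphicNFOn_div_mul hf₁ hf₂ hz (horder z hz)
    _ = g x * f₂ z := by
      rw [eq_of_forall_mem_frontier_norm_eq_one hUb hUo hUc hg hg0 hg_frontier (subset_closure hz)
        (frontier_subset_closure hx)]
    _ = f₂ z := by rw [hgx, one_mul]

end Complex

/-- Let `0 < r < 1` and let `f₁, f₂ : 𝔸_r → 𝔻` be proper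
holomorphic maps extending continuously to the closed annulus
`Ā_r = {r ≤ |z| ≤ 1}`.  If `f₁` and `f₂` have the same order of vanishing at
every point of `𝔸_r` and `f₁(1) = f₂(1) = 1`, then `f₁ = f₂` on `𝔸_r`. -/
theorem proper_annulus_to_disk_unique (r : ℝ) (hr0 : 0 < r) (hr1 : r < 1)
    (f₁ f₂ : ℂ → ℂ)
    (hf₁ : DifferentiableOn ℂ f₁ {z : ℂ | r < ‖z‖ ∧ ‖z‖ < 1})
    (hf₂ : DifferentiableOn ℂ f₂ {z : ℂ | r < ‖z‖ ∧ ‖z‖ < 1})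
    (hc₁ : ContinuousOn f₁ {z : ℂ | r ≤ ‖z‖ ∧ ‖z‖ ≤ 1})
    (hc₂ : ContinuousOn f₂ {z : ℂ | r ≤ ‖z‖ ∧ ‖z‖ ≤ 1})
    (hmaps₁ : ∀ z ∈ {z : ℂ | r < ‖z‖ ∧ ‖z‖ < 1},
      ‖f₁ z‖ < 1)
    (hmaps₂ : ∀ z ∈ {z : ℂ | r < ‖z‖ ∧ ‖z‖ < 1},
      ‖f₂ z‖ < 1)
    (hproper₁ : ∀ K : Set ℂ, K ⊆ Metric.ball 0 1 → IsCompact K →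
      IsCompact ({z : ℂ | r < ‖z‖ ∧ ‖z‖ < 1} ∩ f₁ ⁻¹' K))
    (hproper₂ : ∀ K : Set ℂ, K ⊆ Metric.ball 0 1 → IsCompact K →
      IsCompact ({z : ℂ | r < ‖z‖ ∧ ‖z‖ < 1} ∩ f₂ ⁻¹' K))
    (horder : ∀ z ∈ {z : ℂ | r < ‖z‖ ∧ ‖z‖ < 1},
      ∀ (h₁ : AnalyticAt ℂ f₁ z) (h₂ : AnalyticAt ℂ f₂ z), analyticOrderAt f₁ z = analyticOrderAt f₂ z)
    (hone₁ : f₁ 1 = 1) (hone₂ : f₂ 1 = 1) :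
    Set.EqOn f₁ f₂ {z : ℂ | r < ‖z‖ ∧ ‖z‖ < 1} := by
  set U : Set ℂ := {z : ℂ | r < ‖z‖ ∧ ‖z‖ < 1}
  have hUo : IsOpen U := isOpen_Ioo.preimage continuous_norm
  have hUb : IsBounded U := isBounded_ball.subset fun z hz => mem_ball_zero_iff.2 hz.2
  have hcl : closure U ⊆ {z : ℂ | r ≤ ‖z‖ ∧ ‖z‖ ≤ 1} :=
    closure_minimal (fun z hz => ⟨hz.1.le, hz.2.le⟩) (isClosed_Icc.preimage continuous_norm)
  have h1 : (1 : ℂ) ∈ frontier U := by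
    have hseg : ((↑) : ℝ → ℂ) '' Ioo r 1 ⊆ U := by
      rintro _ ⟨t, ht, rfl⟩
      simpa [U, abs_of_pos (hr0.trans ht.1)] using ht
    have h1seg : (1 : ℝ) ∈ closure (Ioo r 1) := by simp [closure_Ioo hr1.ne, hr1.le]
    rw [hUo.frontier_eq]
    exact ⟨closure_mono hseg (image_closure_subset_closure_image continuous_ofReal
      ⟨1, h1seg, ofReal_one⟩), fun h => h.2.ne norm_one⟩
  have hb : ∀ f : ℂ → ℂ, ContinuousOn f {z : ℂ | r ≤ ‖z‖ ∧ ‖z‖ ≤ 1} → (∀ z ∈ U, ‖f z‖ < 1) →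
      (∀ K ⊆ ball 0 1, IsCompact K → IsCompact (U ∩ f ⁻¹' K)) → ∀ z ∈ frontier U, ‖f z‖ = 1 :=
    fun f hc hmaps hproper z hz => by
      rw [hUo.frontier_eq] at hz
      exact norm_eq_one_of_mem_closure_of_notMem (hc.mono hcl) hmaps hproper hz.1 hz.2
  have han₁ := hf₁.analyticOnNhd hUo
  have han₂ := hf₂.analyticOnNhd hUo
  exact eqOn_of_analyticOrderAt_eq_of_norm_eq_one_on_frontier hUb hUo
    (isPreconnected_norm_preimage_Ioo (by simp) hr0.le) han₁ han₂ (hc₁.mono hcl) (hc₂.mono hcl)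
    (hb f₁ hc₁ hmaps₁ hproper₁) (hb f₂ hc₂ hmaps₂ hproper₂)
    (fun z hz => horder z hz (han₁ z hz) (han₂ z hz)) h1 (hone₁.trans hone₂.symm)
end

section
/- Fix 0 < r < 1 and integers e > δ > 0. Let X = {(p_1, …, p_e) ∈ ℂ^e : r < |p_k| < 1 for all k, and |p_1 ⋯ p_e| = r^δ} and L = {(ζ_1, …, ζ_e) ∈ (ℂ ∖ {0})^e : |ζ_1 ⋯ ζ_e| = 1}, each with the subspace topology from ℂ^e. Define φ_r(p) = ((|p| − r)/(1 − |p|)) · (p/|p|) and Φ_r(p_1, …, p_e) = (φ_r(p_1)/Q, …, φ_r(p_e)/Q) where Q = |φ_r(p_1) ⋯ φ_r(p_e)|^{1/e}. Then Φ_r : X → L is a homeomorphism, whose inverse Ψ_r is given by Ψ_r(ζ_1, …, ζ_e) = (((|ζ_1| + t_0 r)/(|ζ_1| + t_0)) · (ζ_1/|ζ_1|), …, ((|ζ_e| + t_0 r)/(|ζ_e| + t_0)) · (ζ_e/|ζ_e|)), where t_0 = t_0(ζ_1, …, ζ_e) is the unique positive number with ∏_{k=1}^e (|ζ_k| + t_0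 r)/(|ζ_k| + t_0) = r^δ. Both Φ_r and Ψ_r commute with permutations of the coordinates. -/
/-!
Both maps act radially, coordinate by coordinate. `Φ_r` applies the modulus map
`s ↦ (s - r)/(1 - s)` and divides by the geometric mean of the new moduli, so it ignores a common
positive factor. The modulus map has inverse `v ↦ (v + r)/(v + 1)`, and precomposing it with
`u ↦ u / t` gives `u ↦ (u + t r)/(u + t)`. Hence `Φ_r ∘ Ψ(t; ·) = id` on `L` for every `t > 0`,
while `Ψ(t; ·) ∘ Φ_r = id` on `X` when `t` is the reciprocal of that geometric mean; this `t`
solves `g(t) = r^δ`, whose positive root is unique because `g` decreases strictly from `1` to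
`r^e < r^δ`. Strict monotonicity in `t` and continuity in `ζ` make `t₀` continuous.
-/

open Finset Complex

/-- The map `φ_r(p) = ((|p| − r)/(1 − |p|)) · (p/|p|)` sending the annulus
`𝔸_r` to the punctured plane `ℂ∗`. -/
noncomputable def annulusInflate (r : ℝ) (p : ℂ) : ℂ :=
  (((‖p‖ - r) / (1 - ‖p‖) : ℝ) : ℂ) *
    (p / (‖p‖ : ℂ))

/-- The normalized map
`Φ_r(p₁,…,p_e) = (φ_r(p₁)/Q, …, φ_r(p_e)/Q)` with
`Q = |φ_r(p₁) ⋯ φ_r(p_e)|^{1/e}`. -/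
noncomputable def annulusInflateNormalized (r : ℝ) {e : ℕ}
    (p : Fin e → ℂ) : Fin e → ℂ := fun k =>
  annulusInflate r (p k) /
    (((∏ j, ‖annulusInflate r (p j)‖) ^ ((1 : ℝ) / e) : ℝ) : ℂ)

/-- The candidate inverse formula
`Ψ(t₀; ζ)ₖ = ((|ζₖ| + t₀ r)/(|ζₖ| + t₀)) · (ζₖ/|ζₖ|)`. -/
noncomputable def annulusDeflate (r t₀ : ℝ) {e : ℕ}
    (ζ : Fin e → ℂ) : Fin e → ℂ := fun k =>
  (((‖ζ k‖ + t₀ * r) / (‖ζ k‖ + t₀) : ℝ) : ℂ) *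
    (ζ k / (‖ζ k‖ : ℂ))

/-- The space `X` of `e`-tuples in `𝔸_r` with `|p₁ ⋯ p_e| = r^δ`. -/
def annulusZeroTuples (r : ℝ) (e δ : ℕ) : Set (Fin e → ℂ) :=
  {p | (∀ k, r < ‖p k‖ ∧ ‖p k‖ < 1) ∧
    ‖∏ k, p k‖ = r ^ δ}

/-- The space `L` of `e`-tuples of nonzero complex numbers with
`|ζ₁ ⋯ ζ_e| = 1`. -/
def unitProductTuples (e : ℕ) : Set (Fin e → ℂ) :=
  {ζ | (∀ k, ζ k ≠ 0) ∧ ‖∏ k, ζ k‖ = 1}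

open Filter Topology

noncomputable def radialMap (R : ℝ → ℝ) (z : ℂ) : ℂ :=
  (R ‖z‖ : ℂ) * (z / (‖z‖ : ℂ))

theorem norm_radialMap {R : ℝ → ℝ} {z : ℂ} (hz : z ≠ 0) (hR : 0 ≤ R ‖z‖) :
    ‖radialMap R z‖ = R ‖z‖ := by
  have : ‖z‖ ≠ 0 := norm_ne_zero_iff.2 hz
  simp [radialMap, abs_of_nonneg hR, this]

theorem radialMap_comp {R S : ℝ → ℝ} {z : ℂ} (hS : 0 < S ‖z‖) :
    radialMap R (radialMap S z) = radialMap (R ∘ S) z := by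
  rcases eq_or_ne z 0 with rfl | hz
  · simp [radialMap]
  have hSz : (S ‖z‖ : ℂ) ≠ 0 := by exact_mod_cast hS.ne'
  rw [radialMap, norm_radialMap hz hS.le, radialMap, radialMap, mul_div_cancel_left₀ _ hSz]
  rfl

theorem radialMap_congr {R S : ℝ → ℝ} {z : ℂ} (h : R ‖z‖ = S ‖z‖) :
    radialMap R z = radialMap S z := by
  rw [radialMap, radialMap, h]

theorem radialMap_id (z : ℂ) : radialMap id z = z := by
  rcases eq_or_ne z 0 with rfl | hz
  · simp [radialMap]
  · have : (‖z‖ : ℂ) ≠ 0 := by exact_mod_cast norm_ne_zero_iff.2 hz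
    simp [radialMap, mul_div_cancel₀ _ this]

theorem radialMap_div_ofReal (R : ℝ → ℝ) (z : ℂ) (c : ℝ) :
    radialMap R z / c = radialMap (fun u => R u / c) z := by
  simp only [radialMap, ofReal_div]
  ring

noncomputable def inflateRadius (r s : ℝ) : ℝ := (s - r) / (1 - s)

noncomputable def deflateRadius (r t u : ℝ) : ℝ := (u + t * r) / (u + t)

theorem annulusInflate_eq_radialMap (r : ℝ) : annulusInflate r = radialMap (inflateRadius r) :=
  rfl

theorem annulusDeflate_apply {e : ℕ} (r t : ℝ) (ζ : Fin e → ℂ) (k : Fin e) :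
    annulusDeflate r t ζ k = radialMap (deflateRadius r t) (ζ k) :=
  rfl

theorem inflateRadius_pos {r s : ℝ} (hrs : r < s) (hs : s < 1) : 0 < inflateRadius r s :=
  div_pos (by linarith) (by linarith)

theorem deflateRadius_pos {r t u : ℝ} (hr : 0 ≤ r) (ht : 0 ≤ t) (hu : 0 < u) :
    0 < deflateRadius r t u :=
  div_pos (by positivity) (by positivity)

theorem lt_deflateRadius {r t u : ℝ} (hr : r < 1) (ht : 0 ≤ t) (hu : 0 < u) :
    r < deflateRadius r t u := by
  rw [deflateRadius, lt_div_iff₀ (by positivity)]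
  nlinarith

theorem deflateRadius_lt_one {r t u : ℝ} (hr : r < 1) (ht : 0 < t) (hu : 0 ≤ u) :
    deflateRadius r t u < 1 := by
  rw [deflateRadius, div_lt_one (by positivity)]
  nlinarith

theorem deflateRadius_zero {u : ℝ} (r : ℝ) (hu : u ≠ 0) : deflateRadius r 0 u = 1 := by
  simp [deflateRadius, hu]

theorem deflateRadius_lt_deflateRadius {r t₁ t₂ u : ℝ} (hr : r < 1) (hu : 0 < u)
    (ht₁ : 0 ≤ t₁) (ht : t₁ < t₂) : deflateRadius r t₂ u < deflateRadius r t₁ u := by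
  rw [deflateRadius, deflateRadius, div_lt_div_iff₀ (by linarith) (by linarith)]
  nlinarith [mul_pos (mul_pos hu (sub_pos.2 ht)) (sub_pos.2 hr)]

theorem tendsto_deflateRadius_atTop (r u : ℝ) :
    Tendsto (fun t => deflateRadius r t u) atTop (𝓝 r) := by
  have hsmall : Tendsto (fun t => u * (1 - r) / (u + t)) atTop (𝓝 0) :=
    tendsto_const_nhds.div_atTop (tendsto_atTop_add_const_left _ u tendsto_id)
  refine (by simpa using hsmall.const_add r : Tendsto _ _ (𝓝 r)).congr' ?_
  filter_upwards [eventually_gt_atTop (-u)] with t ht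
  have : u + t ≠ 0 := by linarith
  rw [deflateRadius]
  field_simp
  ring

theorem deflateRadius_inv_div (r x : ℝ) {Q : ℝ} (hQ : Q ≠ 0) :
    deflateRadius r Q⁻¹ (x / Q) = deflateRadius r 1 x := by
  rw [deflateRadius, deflateRadius, show x / Q + Q⁻¹ * r = (x + 1 * r) / Q by ring,
    show x / Q + Q⁻¹ = (x + 1) / Q by ring, div_div_div_cancel_right₀ hQ]

theorem deflateRadius_one_inflateRadius {r s : ℝ} (hr : r ≠ 1) (hs : s ≠ 1) :
    deflateRadius r 1 (inflateRadius r s) = s := by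
  have h1 : 1 - s ≠ 0 := sub_ne_zero.2 (Ne.symm hs)
  have h2 : 1 - r ≠ 0 := sub_ne_zero.2 (Ne.symm hr)
  have hden : inflateRadius r s + 1 = (1 - r) / (1 - s) := by
    rw [inflateRadius]; field_simp; ring
  rw [deflateRadius, hden, div_eq_iff (div_ne_zero h2 h1), inflateRadius]
  field_simp
  ring

theorem inflateRadius_deflateRadius {r t u : ℝ} (hr : r ≠ 1) (ht : t ≠ 0) (hut : u + t ≠ 0) :
    inflateRadius r (deflateRadius r t u) = u / t := by
  have h2 : 1 - r ≠ 0 := sub_ne_zero.2 (Ne.symm hr)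
  have hnum : deflateRadius r t u - r = u * (1 - r) / (u + t) := by
    rw [deflateRadius]; field_simp; ring
  have hden : 1 - deflateRadius r t u = t * (1 - r) / (u + t) := by
    rw [deflateRadius]; field_simp; ring
  rw [inflateRadius, hnum, hden]
  field_simp

/-- The function `g` of the paper, whose root `g(t₀) = r^δ` defines `Ψ_r`. -/
noncomputable def deflateNormProd (r : ℝ) {e : ℕ} (ζ : Fin e → ℂ) (t : ℝ) : ℝ :=
  ∏ k, deflateRadius r t ‖ζ k‖

section deflateNormProd

variable {r : ℝ} {e : ℕ} {ζ : Fin e → ℂ}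

theorem deflateNormProd_zero (hζ : ∀ k, ζ k ≠ 0) : deflateNormProd r ζ 0 = 1 :=
  Finset.prod_eq_one fun k _ => deflateRadius_zero r (norm_ne_zero_iff.2 (hζ k))

theorem strictAntiOn_deflateNormProd (hr0 : 0 ≤ r) (hr1 : r < 1) (he : e ≠ 0)
    (hζ : ∀ k, ζ k ≠ 0) : StrictAntiOn (deflateNormProd r ζ) (Set.Ici 0) := by
  have : Nonempty (Fin e) := ⟨⟨0, Nat.pos_of_ne_zero he⟩⟩
  intro t₁ ht₁ t₂ ht₂ ht
  exact Finset.prod_lt_prod_of_nonempty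
    (fun k _ => deflateRadius_pos hr0 (le_trans ht₁ ht.le) (norm_pos_iff.2 (hζ k)))
    (fun k _ => deflateRadius_lt_deflateRadius hr1 (norm_pos_iff.2 (hζ k)) ht₁ ht)
    Finset.univ_nonempty

theorem tendsto_deflateNormProd_atTop :
    Tendsto (deflateNormProd r ζ) atTop (𝓝 (r ^ e)) := by
  have h := tendsto_finsetProd Finset.univ fun k (_ : k ∈ Finset.univ) =>
    tendsto_deflateRadius_atTop r ‖ζ k‖
  rwa [Finset.prod_const, Finset.card_univ, Fintype.card_fin] at h

theorem continuous_deflateNormProd_of_pos {t : ℝ} (ht : 0 < t) :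
    Continuous fun ζ : Fin e → ℂ => deflateNormProd r ζ t := by
  unfold deflateNormProd deflateRadius
  fun_prop (disch := intros; positivity)

theorem continuousOn_deflateNormProd (hζ : ∀ k, ζ k ≠ 0) :
    ContinuousOn (deflateNormProd r ζ) (Set.Ici 0) := by
  refine continuousOn_finsetProd _ fun k _ => ?_
  have hk := norm_pos_iff.2 (hζ k)
  exact ContinuousOn.div (by fun_prop) (by fun_prop) fun t (ht : 0 ≤ t) => by positivity

theorem exists_deflateNormProd_eq (hζ : ∀ k, ζ k ≠ 0) {c : ℝ}
    (hc : r ^ e < c) (hc1 : c < 1) : ∃ t, 0 < t ∧ deflateNormProd r ζ t = c := by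
  obtain ⟨T, hTc, hT0⟩ := (((tendsto_deflateNormProd_atTop (ζ := ζ)).eventually
    (gt_mem_nhds hc)).and (eventually_gt_atTop (0 : ℝ))).exists
  obtain ⟨t, ht, htc⟩ := intermediate_value_Icc' hT0.le
    ((continuousOn_deflateNormProd hζ).mono Set.Icc_subset_Ici_self)
    ⟨hTc.le, (deflateNormProd_zero hζ).symm ▸ hc1.le⟩
  refine ⟨t, lt_of_le_of_ne ht.1 ?_, htc⟩
  rintro rfl
  rw [deflateNormProd_zero hζ] at htc
  exact hc1.ne' htc

end deflateNormProd

theorem continuousOn_of_strictAntiOn_root {X : Type*} [TopologicalSpace X] {F : X → ℝ → ℝ}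
    {τ : X → ℝ} {S : Set X} {c : ℝ} (hF : ∀ t > 0, Continuous fun x => F x t)
    (hanti : ∀ x ∈ S, StrictAntiOn (F x) (Set.Ioi 0))
    (hτ : ∀ x ∈ S, 0 < τ x ∧ F x (τ x) = c) : ContinuousOn τ S := by
  intro x₀ hx₀
  obtain ⟨hτ₀, hF₀⟩ := hτ x₀ hx₀
  refine tendsto_order.2 ⟨fun a ha => ?_, fun b hb => ?_⟩
  · rcases le_or_gt a 0 with ha0 | ha0
    · filter_upwards [self_mem_nhdsWithin] with x hx
      exact ha0.trans_lt (hτ x hx).1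
    · have hca : c < F x₀ a := hF₀ ▸ hanti x₀ hx₀ ha0 hτ₀ ha
      filter_upwards [self_mem_nhdsWithin,
        nhdsWithin_le_nhds ((hF a ha0).continuousAt.eventually (lt_mem_nhds hca))] with x hx hxa
      obtain ⟨hτx, hFx⟩ := hτ x hx
      exact ((hanti x hx).lt_iff_gt hτx ha0).1 (hFx ▸ hxa)
  · have hb0 : 0 < b := hτ₀.trans hb
    have hcb : F x₀ b < c := hF₀ ▸ hanti x₀ hx₀ hτ₀ hb0 hb
    filter_upwards [self_mem_nhdsWithin,
      nhdsWithin_le_nhds ((hF b hb0).continuousAt.eventually (gt_mem_nhds hcb))] with x hx hxb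
    obtain ⟨hτx, hFx⟩ := hτ x hx
    exact ((hanti x hx).lt_iff_gt hb0 hτx).1 (hFx ▸ hxb)

/-- The parameter `t₀(ζ)` of `Ψ_r`; a junk value when `ζ` has a zero coordinate. -/
noncomputable def deflateTime (r : ℝ) (δ : ℕ) {e : ℕ} (ζ : Fin e → ℂ) : ℝ :=
  Classical.epsilon fun t => 0 < t ∧ deflateNormProd r ζ t = r ^ δ

section deflateTime

variable {r : ℝ} {e δ : ℕ} {ζ : Fin e → ℂ}

theorem deflateTime_spec (hr0 : 0 < r) (hr1 : r < 1) (hδ0 : 0 < δ) (hδe : δ < e)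
    (hζ : ∀ k, ζ k ≠ 0) :
    0 < deflateTime r δ ζ ∧ deflateNormProd r ζ (deflateTime r δ ζ) = r ^ δ :=
  Classical.epsilon_spec <| exists_deflateNormProd_eq hζ
    (pow_lt_pow_right_of_lt_one₀ hr0 hr1 hδe) (pow_lt_one₀ hr0.le hr1 hδ0.ne')

theorem deflateTime_eq (hr0 : 0 < r) (hr1 : r < 1) (hδ0 : 0 < δ) (hδe : δ < e)
    (hζ : ∀ k, ζ k ≠ 0) {t : ℝ} (ht : 0 < t) (h : deflateNormProd r ζ t = r ^ δ) :
    deflateTime r δ ζ = t :=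
  have hspec := deflateTime_spec hr0 hr1 hδ0 hδe hζ
  (strictAntiOn_deflateNormProd hr0.le hr1 (by omega) hζ).injOn hspec.1.le ht.le
    (hspec.2.trans h.symm)

theorem continuousOn_deflateTime (hr0 : 0 < r) (hr1 : r < 1) (hδ0 : 0 < δ) (hδe : δ < e) :
    ContinuousOn (deflateTime r δ) {ζ : Fin e → ℂ | ∀ k, ζ k ≠ 0} :=
  continuousOn_of_strictAntiOn_root (fun _ ht => continuous_deflateNormProd_of_pos ht)
    (fun _ hζ => (strictAntiOn_deflateNormProd hr0.le hr1 (by omega) hζ).mono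
      Set.Ioi_subset_Ici_self)
    fun _ hζ => deflateTime_spec hr0 hr1 hδ0 hδe hζ

end deflateTime

noncomputable def geomMeanNormalize {e : ℕ} (a : Fin e → ℂ) : Fin e → ℂ := fun k =>
  a k / (((∏ j, ‖a j‖) ^ ((1 : ℝ) / e) : ℝ) : ℂ)

section geomMeanNormalize

variable {e : ℕ}

theorem annulusInflateNormalized_eq (r : ℝ) (p : Fin e → ℂ) :
    annulusInflateNormalized r p = geomMeanNormalize fun k => annulusInflate r (p k) :=
  rfl

theorem geomMeanNormalize_mem_unitProductTuples {a : Fin e → ℂ} (ha : ∀ k, a k ≠ 0) :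
    geomMeanNormalize a ∈ unitProductTuples e := by
  have hP : 0 < ∏ j, ‖a j‖ := Finset.prod_pos fun j _ => norm_pos_iff.2 (ha j)
  have hQ := Real.rpow_pos_of_pos hP ((1 : ℝ) / e)
  refine ⟨fun k => div_ne_zero (ha k) (by exact_mod_cast hQ.ne'), ?_⟩
  rcases eq_or_ne e 0 with rfl | he
  · simp
  have hQe : ((∏ j, ‖a j‖) ^ ((1 : ℝ) / e)) ^ e = ∏ j, ‖a j‖ := by
    rw [one_div, Real.rpow_inv_natCast_pow hP.le he]
  simp only [geomMeanNormalize]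
  rw [Finset.prod_div_distrib, Finset.prod_const, Finset.card_univ,
    Fintype.card_fin, norm_div, norm_prod, norm_pow, norm_real, Real.norm_of_nonneg hQ.le, hQe,
    div_self hP.ne']

theorem geomMeanNormalize_div_ofReal (a : Fin e → ℂ) {c : ℝ} (hc : 0 < c) :
    geomMeanNormalize (fun k => a k / c) = geomMeanNormalize a := by
  rcases eq_or_ne e 0 with rfl | he
  · exact Subsingleton.elim _ _
  have hnorm : ∏ j, ‖a j / c‖ = (∏ j, ‖a j‖) / c ^ e := by
    simp [Finset.prod_div_distrib, abs_of_pos hc]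
  have hroot :
      ((∏ j, ‖a j‖) / c ^ e) ^ ((1 : ℝ) / e) = (∏ j, ‖a j‖) ^ ((1 : ℝ) / e) / c := by
    rw [Real.div_rpow (by positivity) (by positivity), one_div,
      Real.pow_rpow_inv_natCast hc.le he]
  funext k
  rw [geomMeanNormalize, geomMeanNormalize, hnorm, hroot, ofReal_div,
    div_div_div_cancel_right₀ (by exact_mod_cast hc.ne')]

theorem geomMeanNormalize_of_mem {ζ : Fin e → ℂ} (hζ : ζ ∈ unitProductTuples e) :
    geomMeanNormalize ζ = ζ := by
  funext k
  simp [geomMeanNormalize, ← norm_prod, hζ.2]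

theorem geomMeanNormalize_comp_perm (a : Fin e → ℂ) (σ : Equiv.Perm (Fin e)) :
    geomMeanNormalize (a ∘ σ) = geomMeanNormalize a ∘ σ := by
  funext k
  simp only [geomMeanNormalize, Function.comp_apply, Equiv.prod_comp σ fun j => ‖a j‖]

end geomMeanNormalize

section maps

variable {r : ℝ} {e δ : ℕ}

theorem norm_annulusInflate {p : ℂ} (hr : 0 ≤ r) (hrp : r < ‖p‖) (hp : ‖p‖ < 1) :
    ‖annulusInflate r p‖ = inflateRadius r ‖p‖ :=
  norm_radialMap (norm_pos_iff.1 (hr.trans_lt hrp)) (inflateRadius_pos hrp hp).le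

theorem norm_annulusInflate_pos {p : ℂ} (hr : 0 ≤ r) (hrp : r < ‖p‖) (hp : ‖p‖ < 1) :
    0 < ‖annulusInflate r p‖ :=
  norm_annulusInflate hr hrp hp ▸ inflateRadius_pos hrp hp

theorem norm_annulusDeflate {t : ℝ} {ζ : Fin e → ℂ} {k : Fin e} (hr : 0 ≤ r) (ht : 0 ≤ t)
    (hζ : ζ k ≠ 0) : ‖annulusDeflate r t ζ k‖ = deflateRadius r t ‖ζ k‖ :=
  norm_radialMap hζ (deflateRadius_pos hr ht (norm_pos_iff.2 hζ)).le

theorem annulusInflateNormalized_mem {p : Fin e → ℂ} (hr : 0 ≤ r)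
    (hp : p ∈ annulusZeroTuples r e δ) : annulusInflateNormalized r p ∈ unitProductTuples e :=
  geomMeanNormalize_mem_unitProductTuples fun k =>
    norm_pos_iff.1 (norm_annulusInflate_pos hr (hp.1 k).1 (hp.1 k).2)

theorem annulusDeflate_mem {t : ℝ} {ζ : Fin e → ℂ} (hr0 : 0 ≤ r) (hr1 : r < 1) (ht : 0 < t)
    (hζ : ∀ k, ζ k ≠ 0) (hζt : deflateNormProd r ζ t = r ^ δ) :
    annulusDeflate r t ζ ∈ annulusZeroTuples r e δ := by
  refine ⟨fun k => ?_, ?_⟩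
  · rw [norm_annulusDeflate hr0 ht.le (hζ k)]
    exact ⟨lt_deflateRadius hr1 ht.le (norm_pos_iff.2 (hζ k)),
      deflateRadius_lt_one hr1 ht (norm_nonneg _)⟩
  · rw [norm_prod, Finset.prod_congr rfl fun k _ => norm_annulusDeflate hr0 ht.le (hζ k)]
    exact hζt

theorem annulusInflateNormalized_annulusDeflate {t : ℝ} {ζ : Fin e → ℂ} (hr0 : 0 ≤ r)
    (hr1 : r < 1) (ht : 0 < t) (hζ : ζ ∈ unitProductTuples e) :
    annulusInflateNormalized r (annulusDeflate r t ζ) = ζ := by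
  have hcoord : ∀ k, annulusInflate r (annulusDeflate r t ζ k) = ζ k / t := fun k => by
    have hk := norm_pos_iff.2 (hζ.1 k)
    rw [annulusInflate_eq_radialMap, annulusDeflate_apply,
      radialMap_comp (deflateRadius_pos hr0 ht.le hk),
      radialMap_congr (S := fun u => id u / t)
        (inflateRadius_deflateRadius hr1.ne ht.ne' (by positivity)),
      ← radialMap_div_ofReal, radialMap_id]
  rw [annulusInflateNormalized_eq, funext hcoord, geomMeanNormalize_div_ofReal _ ht,
    geomMeanNormalize_of_mem hζ]

theorem annulusDeflate_inv_annulusInflate_div {p : Fin e → ℂ} {Q : ℝ} (hr1 : r < 1)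
    (hQ : 0 < Q) (hp : ∀ k, r < ‖p k‖ ∧ ‖p k‖ < 1) :
    annulusDeflate r Q⁻¹ (fun k => annulusInflate r (p k) / Q) = p := by
  funext k
  obtain ⟨hrp, hp1⟩ := hp k
  rw [annulusDeflate_apply, annulusInflate_eq_radialMap, radialMap_div_ofReal,
    radialMap_comp (S := fun u => inflateRadius r u / Q)
      (div_pos (inflateRadius_pos hrp hp1) hQ),
    radialMap_congr (S := id), radialMap_id]
  simp only [Function.comp_apply, id_eq]
  rw [deflateRadius_inv_div _ _ hQ.ne', deflateRadius_one_inflateRadius hr1.ne hp1.ne]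

theorem annulusDeflate_annulusInflateNormalized {p : Fin e → ℂ} (hr0 : 0 < r) (hr1 : r < 1)
    (hδ0 : 0 < δ) (hδe : δ < e) (hp : p ∈ annulusZeroTuples r e δ) :
    annulusDeflate r (deflateTime r δ (annulusInflateNormalized r p))
      (annulusInflateNormalized r p) = p := by
  set Q := (∏ j, ‖annulusInflate r (p j)‖) ^ ((1 : ℝ) / e)
  have hQ : 0 < Q := Real.rpow_pos_of_pos (Finset.prod_pos fun j _ =>
    norm_annulusInflate_pos hr0.le (hp.1 j).1 (hp.1 j).2) _
  have hback : annulusDeflate r Q⁻¹ (annulusInflateNormalized r p) = p :=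
    annulusDeflate_inv_annulusInflate_div hr1 hQ hp.1
  have hΦ := (annulusInflateNormalized_mem hr0.le hp).1
  suffices deflateTime r δ (annulusInflateNormalized r p) = Q⁻¹ by rw [this]; exact hback
  refine deflateTime_eq hr0 hr1 hδ0 hδe hΦ (inv_pos.2 hQ) ?_
  calc deflateNormProd r (annulusInflateNormalized r p) Q⁻¹
      = ∏ k, ‖annulusDeflate r Q⁻¹ (annulusInflateNormalized r p) k‖ :=
        Finset.prod_congr rfl fun k _ =>
          (norm_annulusDeflate hr0.le (inv_pos.2 hQ).le (hΦ k)).symm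
    _ = r ^ δ := by rw [← norm_prod, hback, hp.2]

end maps

section continuity

variable {r : ℝ} {e δ : ℕ}

theorem continuousOn_annulusInflateNormalized (hr : 0 ≤ r) :
    ContinuousOn (annulusInflateNormalized r) (annulusZeroTuples r e δ) := by
  intro p hp
  have hpos : ∀ j, 0 < ‖p j‖ := fun j => hr.trans_lt (hp.1 j).1
  have hP : 0 < ∏ j, ‖annulusInflate r (p j)‖ := Finset.prod_pos fun j _ =>
    norm_annulusInflate_pos hr (hp.1 j).1 (hp.1 j).2
  have hinfl : ∀ j, ContinuousAt (fun q : Fin e → ℂ => annulusInflate r (q j)) p := fun j => by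
    have h1 : 1 - ‖p j‖ ≠ 0 := by linarith [(hp.1 j).2]
    have h2 : (‖p j‖ : ℂ) ≠ 0 := by exact_mod_cast (hpos j).ne'
    unfold annulusInflate
    fun_prop (disch := assumption)
  have hQ : ContinuousAt
      (fun q : Fin e → ℂ => (∏ j, ‖annulusInflate r (q j)‖) ^ ((1 : ℝ) / e)) p :=
    (tendsto_finsetProd _ fun j _ => (hinfl j).norm).rpow_const (Or.inl hP.ne')
  refine ContinuousAt.continuousWithinAt (continuousAt_pi.2 fun k => ?_)
  exact (hinfl k).div (continuous_ofReal.continuousAt.comp hQ)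
    (by exact_mod_cast (Real.rpow_pos_of_pos hP _).ne')

theorem continuousOn_annulusDeflate_deflateTime (hr0 : 0 < r) (hr1 : r < 1) (hδ0 : 0 < δ)
    (hδe : δ < e) :
    ContinuousOn (fun ζ => annulusDeflate r (deflateTime r δ ζ) ζ)
      {ζ : Fin e → ℂ | ∀ k, ζ k ≠ 0} := by
  have hopen : IsOpen {ζ : Fin e → ℂ | ∀ k, ζ k ≠ 0} := by
    simpa only [Set.ofPred_forall] using
      isOpen_iInter_of_finite fun k => isOpen_ne_fun (continuous_apply k) continuous_const
  refine continuousOn_of_forall_continuousAt fun ζ hζ => continuousAt_pi.2 fun k => ?_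
  have ht := (continuousOn_deflateTime hr0 hr1 hδ0 hδe).continuousAt (hopen.mem_nhds hζ)
  have ht0 := (deflateTime_spec hr0 hr1 hδ0 hδe hζ).1
  have hk := norm_pos_iff.2 (hζ k)
  have h1 : ‖ζ k‖ + deflateTime r δ ζ ≠ 0 := by positivity
  have h2 : (‖ζ k‖ : ℂ) ≠ 0 := by exact_mod_cast hk.ne'
  have hnorm : ContinuousAt (fun y : Fin e → ℂ => ‖y k‖) ζ :=
    (continuous_norm.comp (continuous_apply k)).continuousAt
  unfold annulusDeflate
  exact (continuous_ofReal.continuousAt.comp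
    ((hnorm.add (ht.mul continuousAt_const)).div (hnorm.add ht) h1)).mul
    (by fun_prop (disch := assumption))

end continuity

/-- For `0 < r < 1` and integers `e > δ > 0`, the map `Φ_r`
is a homeomorphism from `X` onto `L`, with inverse given by the formula `Ψ_r`
(with `t₀ = t₀(ζ)` the unique positive solution of
`∏ₖ (|ζₖ| + t₀ r)/(|ζₖ| + t₀) = r^δ`), and both `Φ_r` and `Ψ_r` commute with
permutations of the coordinates. -/
theorem annulusZeroTuples_homeo_unitProductTuples (r : ℝ) (hr0 : 0 < r)
    (hr1 : r < 1) (e δ : ℕ) (hδ0 : 0 < δ) (hδe : δ < e) :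
    ∃ H : (annulusZeroTuples r e δ) ≃ₜ (unitProductTuples e),
      (∀ p : annulusZeroTuples r e δ,
        (H p : Fin e → ℂ) = annulusInflateNormalized r p.val) ∧
      (∀ ζ : unitProductTuples e, ∃ t₀ : ℝ, 0 < t₀ ∧
        (∏ k, (‖ζ.val k‖ + t₀ * r) / (‖ζ.val k‖ + t₀))
          = r ^ δ ∧
        (H.symm ζ : Fin e → ℂ) = annulusDeflate r t₀ ζ.val) ∧
      (∀ σ : Equiv.Perm (Fin e), ∀ p : Fin e → ℂ,
        annulusInflateNormalized r (p ∘ σ) = annulusInflateNormalized r p ∘ σ) ∧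
      (∀ σ : Equiv.Perm (Fin e), ∀ (t₀ : ℝ) (ζ : Fin e → ℂ),
        annulusDeflate r t₀ (ζ ∘ σ) = annulusDeflate r t₀ ζ ∘ σ) := by
  have hspec (ζ : unitProductTuples e) := deflateTime_spec hr0 hr1 hδ0 hδe ζ.2.1
  let H : annulusZeroTuples r e δ ≃ₜ unitProductTuples e :=
    { toFun p := ⟨annulusInflateNormalized r p.1, annulusInflateNormalized_mem hr0.le p.2⟩
      invFun ζ := ⟨annulusDeflate r (deflateTime r δ ζ.1) ζ.1,
        annulusDeflate_mem hr0.le hr1 (hspec ζ).1 ζ.2.1 (hspec ζ).2⟩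
      left_inv p := Subtype.ext (annulusDeflate_annulusInflateNormalized hr0 hr1 hδ0 hδe p.2)
      right_inv ζ := Subtype.ext
        (annulusInflateNormalized_annulusDeflate hr0.le hr1 (hspec ζ).1 ζ.2)
      continuous_toFun := ((continuousOn_annulusInflateNormalized hr0.le).comp_continuous
        continuous_subtype_val Subtype.prop).subtype_mk _
      continuous_invFun :=
        ((continuousOn_annulusDeflate_deflateTime hr0 hr1 hδ0 hδe).comp_continuous
          continuous_subtype_val fun ζ => ζ.2.1).subtype_mk _ }
  exact ⟨H, fun _ => rfl, fun ζ => ⟨_, (hspec ζ).1, (hspec ζ).2, rfl⟩,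
    fun σ p => geomMeanNormalize_comp_perm (fun k => annulusInflate r (p k)) σ,
    fun _ _ _ => rfl⟩
end

section
/- Let n ≥ 0 and let d_1, …, d_{n+1} be integers, each at least 2, with ∑_{j=1}^{n+1} 1/d_j < 1. Set N = lcm(d_1, …, d_{n+1}) and N* = (1 − ∑_{j=1}^{n+1} 1/d_j)·N = N − ∑_{j=1}^{n+1} N/d_j. Then N* is a positive integer, and for any integers m_1, m_2 and k_1, …, k_{n+1} satisfying m_2 + d_j k_j = m_1 + ∑_{i=1}^{n+1} k_i for every j ∈ {1, …, n+1}, the integer N* divides m_1 − m_2. -/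
open Finset

/-!
Put `A = m₁ - m₂ + ∑ kᵢ`. The hypotheses say `dⱼ kⱼ = A` for every `j`, so every `dⱼ` divides `A`,
hence `A = N t` and `kⱼ = (N / dⱼ) t` for a single integer `t`. Summing over `j` gives
`m₁ - m₂ = A - ∑ kⱼ = (N - ∑ N / dⱼ) t = N* t`. Positivity of `N*` is `∑ N / dⱼ = N ∑ 1 / dⱼ < N`.
-/

variable {ι : Type*}

theorem Finset.sum_div_lt_of_sum_inv_lt {s : Finset ι} {d : ι → ℕ} {N : ℕ} (hN : 0 < N)
    (hdvd : ∀ j ∈ s, d j ∣ N) (hsum : ∑ j ∈ s, (1 : ℝ) / d j < 1) :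
    ∑ j ∈ s, N / d j < N := by
  have hcast : ((∑ j ∈ s, N / d j : ℕ) : ℝ) = N * ∑ j ∈ s, (1 : ℝ) / d j := by
    rw [Nat.cast_sum, Finset.mul_sum]
    refine Finset.sum_congr rfl fun j hj => ?_
    rw [Nat.cast_div_charZero (hdvd j hj), mul_one_div]
  have : ((∑ j ∈ s, N / d j : ℕ) : ℝ) < N := by
    rw [hcast]
    exact mul_lt_of_lt_one_right (by exact_mod_cast hN) hsum
  exact_mod_cast this

theorem Finset.exists_eq_lcm_mul_of_forall_mul_eq {s : Finset ι} {d : ι → ℕ}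
    (hd : ∀ j ∈ s, d j ≠ 0) {k : ι → ℤ} {A : ℤ} (hk : ∀ j ∈ s, d j * k j = A) :
    ∃ t : ℤ, A = (s.lcm d : ℕ) * t ∧ ∀ j ∈ s, k j = (s.lcm d / d j : ℕ) * t := by
  have hlcm : ((s.lcm d : ℕ) : ℤ) ∣ A :=
    Int.natCast_dvd.mpr <| Finset.lcm_dvd fun j hj =>
      Int.natCast_dvd.mp ⟨k j, (hk j hj).symm⟩
  obtain ⟨t, rfl⟩ := hlcm
  refine ⟨t, rfl, fun j hj => mul_left_cancel₀ (Int.natCast_ne_zero.mpr (hd j hj)) ?_⟩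
  have hfactor : ((s.lcm d : ℕ) : ℤ) = d j * (s.lcm d / d j : ℕ) := by
    exact_mod_cast (Nat.mul_div_cancel' (Finset.dvd_lcm hj)).symm
  rw [hk j hj, hfactor, mul_assoc]

theorem exists_sub_eq_mul_of_forall_add_mul_eq [Fintype ι] {d : ι → ℕ} (hd : ∀ j, d j ≠ 0)
    {m₁ m₂ : ℤ} {k : ι → ℤ} (hk : ∀ j, m₂ + d j * k j = m₁ + ∑ i, k i) :
    ∃ t : ℤ, m₁ - m₂ = (((univ.lcm d : ℕ) : ℤ) - ∑ j, ((univ.lcm d / d j : ℕ) : ℤ)) * t := by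
  obtain ⟨t, hA, hkt⟩ := Finset.exists_eq_lcm_mul_of_forall_mul_eq (s := univ) (k := k)
    (A := m₁ - m₂ + ∑ i, k i) (fun j _ => hd j) fun j _ => by linarith [hk j]
  refine ⟨t, ?_⟩
  rw [sub_mul, Finset.sum_mul, ← hA, Finset.sum_congr rfl hkt]
  ring

/-- Let `d 0, …, d n ≥ 2` be integers with `∑ 1/dⱼ < 1`.
Set `N = lcm(d 0, …, d n)` and `N* = N − ∑ⱼ N/dⱼ = (1 − ∑ⱼ 1/dⱼ)·N`.  Then
`N*` is a positive integer, and whenever integers `m₁, m₂, k 0, …, k n`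
satisfy `m₂ + dⱼ·kⱼ = m₁ + ∑ᵢ kᵢ` for every `j`, the integer `N*` divides
`m₁ − m₂`. -/
theorem twist_times_divisibility (n : ℕ) (d : Fin (n + 1) → ℕ)
    (hd : ∀ j, 2 ≤ d j) (hsum : ∑ j, (1 : ℝ) / d j < 1) :
    0 < Finset.univ.lcm d - ∑ j, Finset.univ.lcm d / d j ∧
    ∀ (m₁ m₂ : ℤ) (k : Fin (n + 1) → ℤ),
      (∀ j, m₂ + (d j : ℤ) * k j = m₁ + ∑ i, k i) →
      ((Finset.univ.lcm d - ∑ j, Finset.univ.lcm d / d j : ℕ) : ℤ) ∣ m₁ - m₂ := by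
  have hd₀ : ∀ j, d j ≠ 0 := fun j => by linarith [hd j]
  have hlt : ∑ j, univ.lcm d / d j < univ.lcm d :=
    sum_div_lt_of_sum_inv_lt (Nat.pos_of_ne_zero (lcm_ne_zero_iff.mpr fun j _ => hd₀ j))
      (fun j hj => dvd_lcm hj) hsum
  refine ⟨Nat.sub_pos_of_lt hlt, fun m₁ m₂ k hk => ?_⟩
  obtain ⟨t, ht⟩ := exists_sub_eq_mul_of_forall_add_mul_eq hd₀ hk
  refine ⟨t, ?_⟩
  rw [ht, Nat.cast_sub hlt.le, Nat.cast_sum]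
end

section
/- Let D ≥ 2, let a_1, …, a_D ∈ 𝔻 with a_1 = 0, and let β be the normalized Blaschke product β(z) = ∏_{k=1}^D ((1 − conj(a_k))/(1 − a_k)) · (z − a_k)/(1 − conj(a_k) z), so that β(0) = 0 and β(1) = 1. If θ ∈ ℝ satisfies β(e^{2πiθ} z) = e^{2πiθ} β(z) for all z ∈ 𝔻, then (D − 1)θ ∈ ℤ. If instead θ ∈ ℝ satisfies β(e^{2πiθ} z) = e^{−2πiθ} β(z) for all z ∈ 𝔻, then (D + 1)θ ∈ ℤ. -/
/-!
For `‖ω‖ = 1` each factor satisfies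
`(ωz - a)/(1 - conj a · ωz) = ω (z - a/ω)/(1 - conj (a/ω) z)`, so the Blaschke product `B`
with zeros `aₖ` satisfies `B(ωz) = ω^D B'(z)`, where `B'` has the rotated zeros `aₖ/ω`.
Clearing denominators, `B(ωz) = ε B(z)` on the disk becomes a polynomial identity; its roots
inside the disk are the zeros of `B'` on one side and of `B` on the other (the poles
`1/conj aₖ` lie outside), so the two zero multisets agree, `B' = B`, and `ω^D = ε`.
For `ω = e^{2πiθ}` and `ε = ω^{±1}` this is `ω^{D∓1} = 1`.
-/

open Finset Complex

open Polynomial ComplexConjugate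

noncomputable def blaschkeProduct (s : Multiset ℂ) (z : ℂ) : ℂ :=
  (s.map fun a => (z - a) / (1 - conj a * z)).prod

noncomputable def blaschkeNumerator (s : Multiset ℂ) : ℂ[X] := (s.map fun a => X - C a).prod

noncomputable def blaschkeDenominator (s : Multiset ℂ) : ℂ[X] :=
  (s.map fun a => 1 - C (conj a) * X).prod

section

variable {s t : Multiset ℂ} {ω z : ℂ}

theorem blaschkeProduct_eq_div (s : Multiset ℂ) (z : ℂ) :
    blaschkeProduct s z = (blaschkeNumerator s).eval z / (blaschkeDenominator s).eval z := by
  simp [blaschkeProduct, blaschkeNumerator, blaschkeDenominator, eval_multiset_prod,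
    Multiset.map_map, Multiset.prod_map_div]

theorem one_sub_conj_mul_ne_zero {a : ℂ} (ha : ‖a‖ < 1) (hz : ‖z‖ ≤ 1) :
    1 - conj a * z ≠ 0 := by
  intro h
  have h1 : ‖conj a * z‖ = 1 := by rw [← sub_eq_zero.mp h, norm_one]
  rw [norm_mul, Complex.norm_conj] at h1
  nlinarith [norm_nonneg a, norm_nonneg z]

theorem eval_blaschkeDenominator_ne_zero (hs : ∀ a ∈ s, ‖a‖ < 1) (hz : ‖z‖ ≤ 1) :
    (blaschkeDenominator s).eval z ≠ 0 := by
  simp only [blaschkeDenominator, eval_multiset_prod, Multiset.map_map, Function.comp_def,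
    eval_sub, eval_one, eval_mul, eval_C, eval_X]
  exact Multiset.prod_ne_zero fun h => by
    obtain ⟨a, ha, h0⟩ := Multiset.mem_map.mp h
    exact one_sub_conj_mul_ne_zero (hs a ha) hz h0

theorem blaschkeNumerator_ne_zero (s : Multiset ℂ) : blaschkeNumerator s ≠ 0 :=
  (monic_multiset_prod_of_monic _ _ fun a _ => monic_X_sub_C a).ne_zero

theorem blaschkeDenominator_ne_zero (hs : ∀ a ∈ s, ‖a‖ < 1) : blaschkeDenominator s ≠ 0 :=
  fun h => by simpa [h] using eval_blaschkeDenominator_ne_zero hs (norm_zero.trans_le zero_le_one)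

theorem filter_roots_blaschkeDenominator (hs : ∀ a ∈ s, ‖a‖ < 1) :
    (blaschkeDenominator s).roots.filter (‖·‖ < 1) = 0 :=
  Multiset.filter_eq_nil.mpr fun _ hz hz1 =>
    eval_blaschkeDenominator_ne_zero hs hz1.le (isRoot_of_mem_roots hz)

theorem filter_roots_blaschkeNumerator_mul_blaschkeDenominator (hs : ∀ a ∈ s, ‖a‖ < 1)
    (ht : ∀ a ∈ t, ‖a‖ < 1) :
    (blaschkeNumerator s * blaschkeDenominator t).roots.filter (‖·‖ < 1) = s := by
  rw [roots_mul (mul_ne_zero (blaschkeNumerator_ne_zero s) (blaschkeDenominator_ne_zero ht)),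
    Multiset.filter_add, filter_roots_blaschkeDenominator ht, add_zero, blaschkeNumerator,
    roots_multiset_prod_X_sub_C, Multiset.filter_eq_self.mpr hs]

theorem eval_blaschkeNumerator_mul (hω : ω ≠ 0) (s : Multiset ℂ) (z : ℂ) :
    (blaschkeNumerator s).eval (ω * z) =
      ω ^ s.card * (blaschkeNumerator (s.map (· / ω))).eval z := by
  induction s using Multiset.induction_on with
  | empty => simp [blaschkeNumerator]
  | cons a s ih =>
    simp only [blaschkeNumerator, Multiset.map_cons, Multiset.prod_cons, eval_mul, eval_sub,
      eval_X, eval_C, Multiset.card_cons, pow_succ] at ih ⊢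
    rw [ih]
    field_simp

theorem eval_blaschkeDenominator_mul (hω : ‖ω‖ = 1) (s : Multiset ℂ) (z : ℂ) :
    (blaschkeDenominator s).eval (ω * z) = (blaschkeDenominator (s.map (· / ω))).eval z := by
  have hω' : ω ≠ 0 := by rintro rfl; simp at hω
  induction s using Multiset.induction_on with
  | empty => simp [blaschkeDenominator]
  | cons a s ih =>
    simp only [blaschkeDenominator, Multiset.map_cons, Multiset.prod_cons, eval_mul, eval_sub,
      eval_X, eval_C, eval_one] at ih ⊢
    rw [ih, map_div₀, ← Complex.inv_eq_conj hω]
    field_simp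

theorem pow_card_eq_of_blaschkeProduct_mul (hs : ∀ a ∈ s, ‖a‖ < 1) {ε : ℂ}
    (hω : ‖ω‖ = 1)
    (h : ∀ z ∈ Metric.ball (0 : ℂ) 1, blaschkeProduct s (ω * z) = ε * blaschkeProduct s z) :
    ω ^ s.card = ε := by
  have hω0 : ω ≠ 0 := by rintro rfl; simp at hω
  set s' := s.map (· / ω) with hs'_def
  have hs' : ∀ a ∈ s', ‖a‖ < 1 := by
    simpa [hs'_def, norm_div, hω] using hs
  have hpoly : C (ω ^ s.card) * (blaschkeNumerator s' * blaschkeDenominator s) =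
      C ε * (blaschkeNumerator s * blaschkeDenominator s') := by
    refine eq_of_infinite_eval_eq _ _ <|
      (infinite_of_mem_nhds 0 (Metric.ball_mem_nhds 0 one_pos)).mono fun z hz => ?_
    have hz1 : ‖z‖ ≤ 1 := (mem_ball_zero_iff.mp hz).le
    have hden := eval_blaschkeDenominator_ne_zero hs hz1
    have hden' := eval_blaschkeDenominator_ne_zero hs' hz1
    have := h z hz
    rw [blaschkeProduct_eq_div, blaschkeProduct_eq_div, eval_blaschkeNumerator_mul hω0,
      eval_blaschkeDenominator_mul hω, ← hs'_def] at this
    simp only [Set.mem_ofPred_eq, eval_mul, eval_C]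
    field_simp at this
    linear_combination this
  have hε : ε ≠ 0 := by
    rintro rfl
    simp [hω0, blaschkeNumerator_ne_zero, blaschkeDenominator_ne_zero hs] at hpoly
  have hs's : s' = s := by
    have := congrArg (fun p => p.roots.filter (‖·‖ < 1)) hpoly
    simp only [roots_C_mul _ (pow_ne_zero _ hω0), roots_C_mul _ hε] at this
    rwa [filter_roots_blaschkeNumerator_mul_blaschkeDenominator hs' hs,
      filter_roots_blaschkeNumerator_mul_blaschkeDenominator hs hs'] at this
  rw [hs's] at hpoly
  exact C_injective <| mul_right_cancel₀
    (mul_ne_zero (blaschkeNumerator_ne_zero s) (blaschkeDenominator_ne_zero hs)) hpoly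

end

theorem pow_card_eq_of_normalized_blaschke_mul {ι : Type*} [Fintype ι] {a : ι → ℂ}
    (ha : ∀ k, ‖a k‖ < 1) {β : ℂ → ℂ}
    (hβ : ∀ z : ℂ, β z = ∏ k,
      ((1 - (starRingEnd ℂ) (a k)) / (1 - a k)) *
        ((z - a k) / (1 - (starRingEnd ℂ) (a k) * z)))
    {ω ε : ℂ} (hω : ‖ω‖ = 1)
    (h : ∀ z ∈ Metric.ball (0 : ℂ) 1, β (ω * z) = ε * β z) :
    ω ^ Fintype.card ι = ε := by
  set c := ∏ k, (1 - conj (a k)) / (1 - a k)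
  have hβc : ∀ z, β z = c * blaschkeProduct (univ.val.map a) z := fun z => by
    rw [hβ, prod_mul_distrib, blaschkeProduct, Multiset.map_map, prod_eq_multiset_prod]
    rfl
  have hc : c ≠ 0 := prod_ne_zero_iff.mpr fun k _ => div_ne_zero
    (by simpa using one_sub_conj_mul_ne_zero (ha k) norm_one.le)
    (sub_ne_zero.mpr fun h1 => by simpa [← h1] using ha k)
  simpa using pow_card_eq_of_blaschkeProduct_mul (s := univ.val.map a) (by simpa using ha) hω
    fun z hz => mul_left_cancel₀ hc <| by rw [← hβc, h z hz, hβc]; ring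

theorem exists_int_eq_of_exp_two_pi_I_mul_eq_one {x : ℝ}
    (h : exp (2 * Real.pi * I * x) = 1) : ∃ m : ℤ, x = m := by
  obtain ⟨m, hm⟩ := exp_eq_one_iff.mp h
  refine ⟨m, ofReal_injective ?_⟩
  have h2πI : 2 * (Real.pi : ℂ) * I ≠ 0 := by simp [Real.pi_ne_zero]
  push_cast
  exact mul_left_cancel₀ h2πI (by linear_combination hm)

/-- Let `D ≥ 2`, `a₁, …, a_D ∈ 𝔻` with `a₁ = 0`, and let
`β(z) = ∏ₖ ((1 − conj aₖ)/(1 − aₖ)) · (z − aₖ)/(1 − conj(aₖ) z)` be the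
normalized Blaschke product.  If `β(e^{2πiθ} z) = e^{2πiθ} β(z)` for all
`z ∈ 𝔻`, then `(D − 1)θ ∈ ℤ`; if `β(e^{2πiθ} z) = e^{−2πiθ} β(z)` for all
`z ∈ 𝔻`, then `(D + 1)θ ∈ ℤ`. -/
theorem blaschke_rotation_symmetry (D : ℕ) (a : Fin D → ℂ)
    (ha : ∀ k, ‖a k‖ < 1)
    (β : ℂ → ℂ)
    (hβ : ∀ z : ℂ, β z = ∏ k,
      ((1 - (starRingEnd ℂ) (a k)) / (1 - a k)) *
        ((z - a k) / (1 - (starRingEnd ℂ) (a k) * z)))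
    (θ : ℝ) :
    ((∀ z ∈ Metric.ball (0 : ℂ) 1,
        β (Complex.exp (2 * Real.pi * Complex.I * θ) * z) =
          Complex.exp (2 * Real.pi * Complex.I * θ) * β z) →
      ∃ m : ℤ, ((D : ℝ) - 1) * θ = m) ∧
    ((∀ z ∈ Metric.ball (0 : ℂ) 1,
        β (Complex.exp (2 * Real.pi * Complex.I * θ) * z) =
          Complex.exp (-(2 * Real.pi * Complex.I * θ)) * β z) →
      ∃ m : ℤ, ((D : ℝ) + 1) * θ = m) := by
  set ω := exp (2 * Real.pi * I * θ) with hω_def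
  have hω : ‖ω‖ = 1 := by
    rw [hω_def, show 2 * Real.pi * I * θ = ((2 * Real.pi * θ : ℝ) : ℂ) * I by
      push_cast; ring]
    exact norm_exp_ofReal_mul_I _
  constructor
  · intro h
    have hD := pow_card_eq_of_normalized_blaschke_mul ha hβ hω h
    rw [Fintype.card_fin] at hD
    refine exists_int_eq_of_exp_two_pi_I_mul_eq_one ?_
    rw [show 2 * Real.pi * I * (((D : ℝ) - 1) * θ : ℝ) =
        D * (2 * Real.pi * I * θ) - 2 * Real.pi * I * θ by push_cast; ring,
      exp_sub, exp_nat_mul, ← hω_def, hD, div_self (exp_ne_zero _)]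
  · intro h
    have hD := pow_card_eq_of_normalized_blaschke_mul ha hβ hω h
    rw [Fintype.card_fin, exp_neg, ← hω_def] at hD
    refine exists_int_eq_of_exp_two_pi_I_mul_eq_one ?_
    rw [show 2 * Real.pi * I * (((D : ℝ) + 1) * θ : ℝ) =
        D * (2 * Real.pi * I * θ) + 2 * Real.pi * I * θ by push_cast; ring,
      exp_add, exp_nat_mul, ← hω_def, hD, inv_mul_cancel₀ (exp_ne_zero _)]
end

section
/- Let m, n ≥ 0 be integers, let X be a nonempty connected topological space, and let p : X → ℝ^m × 𝕋^n be a covering map with finite fibers (a finite-to-one covering map), where 𝕋^n = (ℝ/ℤ)^n is the n-dimensional torus. Then X is homeomorphic to ℝ^m × 𝕋^n. -/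
/-!
Lift the projection `q : ℝᵐ × ℝⁿ → ℝᵐ × 𝕋ⁿ` through `p` to `f : ℝᵐ × ℝⁿ → X`; this is possible
because `ℝᵐ × ℝⁿ` is simply connected. Two lifts of the homomorphism `q` that meet differ by a
translation, so the ranges of lifts partition `X` into open sets and `f` is onto, and `f a = f b`
exactly when `b - a` lies in the group `Γ` of periods of `f`. Now `Γ ≤ ker q = 0 × ℤⁿ`, and since
the fibre of `p` through `f 0` is finite, every element of `ker q` has a nonzero multiple in `Γ`.
So `Γ = 0 × Γ₂` with `Γ₂` a full lattice in `ℝⁿ`, and a linear automorphism `L` carries `ker q`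
onto `Γ`. Then `f ∘ L` and `q` are open quotient maps with the same fibres, whence `X ≃ₜ ℝᵐ × 𝕋ⁿ`.
-/

open Topology Function Set

theorem Topology.IsQuotientMap.nonempty_homeomorph {V Y Z : Type*} [TopologicalSpace V]
    [TopologicalSpace Y] [TopologicalSpace Z] {f : V → Y} {g : V → Z} (hf : IsQuotientMap f)
    (hg : IsQuotientMap g) (hfg : ∀ a b, f a = f b ↔ g a = g b) : Nonempty (Y ≃ₜ Z) := by
  have hker : Setoid.ker f = Setoid.ker g := Setoid.ext hfg
  have eY : Quotient (Setoid.ker f) ≃ₜ Y := IsQuotientMap.homeomorph (f := ⟨f, hf.continuous⟩) hf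
  have eZ : Quotient (Setoid.ker g) ≃ₜ Z := IsQuotientMap.homeomorph (f := ⟨g, hg.continuous⟩) hg
  rw [← hker] at eZ
  exact ⟨eY.symm.trans eZ⟩

section Periods

variable {V X : Type*} [AddGroup V]

def Function.periods (f : V → X) : AddSubgroup V where
  carrier := {d | Periodic f d}
  zero_mem' := fun x => by rw [add_zero]
  add_mem' := Periodic.add_period
  neg_mem' := Periodic.neg

variable {B : Type*} [AddGroup B] {p : X → B} {q : V →+ B} {f : V → X}

theorem periods_le_ker_of_comp_eq (hpf : p ∘ f = q) : periods f ≤ q.ker := fun d hd => by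
  rw [AddMonoidHom.mem_ker, ← q.map_zero, ← hpf, comp_apply, comp_apply, ← hd 0, zero_add]

end Periods

namespace IsCoveringMap

variable {V B X : Type*} [TopologicalSpace V] [AddGroup V] [ContinuousAdd V]
  [TopologicalSpace B] [AddGroup B] [TopologicalSpace X]
  {p : X → B} {q : V →+ B} {f g g' : V → X}

theorem apply_eq_apply_add_of_apply_eq [PreconnectedSpace V] (hp : IsCoveringMap p)
    (hg : Continuous g) (hg' : Continuous g') (hpg : p ∘ g = q) (hpg' : p ∘ g' = q)
    {a b : V} (hab : g a = g' b) (c : V) : g c = g' (c + (-a + b)) := by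
  have hqab : q (-a + b) = 0 := by
    rw [map_add, map_neg, neg_add_eq_zero, ← congrFun hpg a, ← congrFun hpg' b, comp_apply,
      comp_apply, hab]
  refine congrFun (hp.eq_of_comp_eq hg (hg'.comp (continuous_add_const _)) ?_ a ?_) c
  · funext c
    change (p ∘ g) c = (p ∘ g') (c + (-a + b))
    rw [hpg, hpg', map_add, hqab, add_zero]
  · rw [comp_apply, add_neg_cancel_left, hab]

theorem range_eq_of_apply_eq [PreconnectedSpace V] (hp : IsCoveringMap p)
    (hg : Continuous g) (hg' : Continuous g') (hpg : p ∘ g = q) (hpg' : p ∘ g' = q)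
    {a b : V} (hab : g a = g' b) : range g = range g' := by
  refine (range_subset_iff.2 fun c => ?_).antisymm (range_subset_iff.2 fun c => ?_)
  · exact ⟨_, (hp.apply_eq_apply_add_of_apply_eq hg hg' hpg hpg' hab c).symm⟩
  · exact ⟨_, (hp.apply_eq_apply_add_of_apply_eq hg' hg hpg' hpg hab.symm c).symm⟩

theorem apply_eq_apply_iff [PreconnectedSpace V] (hp : IsCoveringMap p) (hf : Continuous f)
    (hpf : p ∘ f = q) {a b : V} : f a = f b ↔ -a + b ∈ periods f := by
  refine ⟨fun hab c => (hp.apply_eq_apply_add_of_apply_eq hf hf hpf hpf hab c).symm, fun h => ?_⟩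
  rw [← h a, add_neg_cancel_left]

theorem exists_nsmul_mem_periods [PreconnectedSpace V] (hp : IsCoveringMap p)
    (hf : Continuous f) (hpf : p ∘ f = q) (hfin : (p ⁻¹' {p (f 0)}).Finite) {v : V}
    (hv : v ∈ q.ker) : ∃ k : ℕ, 0 < k ∧ k • v ∈ periods f := by
  have hfib : ∀ k : ℕ, f (k • v) ∈ p ⁻¹' {p (f 0)} := fun k => by
    rw [mem_preimage, mem_singleton_iff, ← comp_apply (f := p), ← comp_apply (f := p), hpf,
      map_nsmul, AddMonoidHom.mem_ker.1 hv, nsmul_zero, map_zero]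
  obtain ⟨k₁, k₂, hlt, heq⟩ := hfin.exists_lt_map_eq_of_forall_mem hfib
  refine ⟨k₂ - k₁, Nat.sub_pos_of_lt hlt, ?_⟩
  have hk : k₂ • v = k₁ • v + (k₂ - k₁) • v := by rw [← add_nsmul, Nat.add_sub_cancel' hlt.le]
  rw [← neg_add_cancel_left (k₁ • v) ((k₂ - k₁) • v), ← hk]
  exact (hp.apply_eq_apply_iff hf hpf).1 heq

theorem isOpenQuotientMap_of_comp_eq [ConnectedSpace X] [SimplyConnectedSpace V]
    [LocallyPathConnectedSpace V] (hp : IsCoveringMap p) (hq : IsCoveringMap q)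
    (hq' : Surjective q) (hf : Continuous f) (hpf : p ∘ f = q) : IsOpenQuotientMap f := by
  have hopen : ∀ g : V → X, Continuous g → p ∘ g = q → IsOpenMap g := fun g hg hpg =>
    (IsLocalHomeomorph.of_comp (hpg ▸ hq.isLocalHomeomorph) hp.isLocalHomeomorph hg).isOpenMap
  have hlift : ∀ x : X, ∃ g : V → X, Continuous g ∧ p ∘ g = q ∧ x ∈ range g := fun x => by
    obtain ⟨v, hv⟩ := hq' (p x)
    obtain ⟨g, hgv, hpg⟩ :=
      (hp.existsUnique_continuousMap_lifts ⟨q, hq.continuous⟩ v x hv.symm).exists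
    exact ⟨g, g.continuous, hpg, v, hgv⟩
  -- The ranges of lifts of `q` are open, cover `X`, and any two are equal or disjoint.
  have hclosed : IsClosed (range f) := by
    refine isOpen_compl_iff.1 (isOpen_iff_forall_mem_open.2 fun x hx => ?_)
    obtain ⟨g, hg, hpg, hxg⟩ := hlift x
    refine ⟨range g, ?_, (hopen g hg hpg).isOpen_range, hxg⟩
    rintro _ ⟨a, rfl⟩ ⟨b, hb⟩
    exact hx (hp.range_eq_of_apply_eq hf hg hpf hpg hb ▸ hxg)
  refine ⟨range_eq_univ.1 ?_, hf, hopen f hf hpf⟩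
  exact IsClopen.eq_univ ⟨hclosed, (hopen f hf hpf).isOpen_range⟩ (range_nonempty f)

end IsCoveringMap

theorem ZLattice.exists_linearEquiv_apply_mem_iff {E : Type*} [NormedAddCommGroup E]
    [NormedSpace ℝ E] [FiniteDimensional ℝ E] (Λ : Submodule ℤ E) [DiscreteTopology Λ]
    [IsZLattice ℝ Λ] {Γ : Submodule ℤ E} (hle : Γ ≤ Λ)
    (hmul : ∀ v ∈ Λ, ∃ k : ℕ, 0 < k ∧ k • v ∈ Γ) :
    ∃ L : E ≃ₗ[ℝ] E, ∀ v, L v ∈ Γ ↔ v ∈ Λ := by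
  have : DiscreteTopology Γ :=
    .of_continuous_injective (continuous_inclusion (s := (Γ : Set E)) hle) (inclusion_injective hle)
  have : IsZLattice ℝ Γ := by
    refine ⟨eq_top_iff.2 <| (IsZLattice.span_top (K := ℝ) (L := Λ)).ge.trans <|
      Submodule.span_le.2 fun v hv => ?_⟩
    obtain ⟨k, hk, hkv⟩ := hmul v hv
    rw [← inv_smul_smul₀ (Nat.cast_ne_zero.2 hk.ne' : (k : ℝ) ≠ 0) v, Nat.cast_smul_eq_nsmul]
    exact Submodule.smul_mem _ _ (Submodule.subset_span hkv)
  let bΛ := (Module.finBasisOfFinrankEq ℤ Λ (ZLattice.rank ℝ Λ)).ofZLatticeBasis ℝ Λ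
  let bΓ := (Module.finBasisOfFinrankEq ℤ Γ (ZLattice.rank ℝ Γ)).ofZLatticeBasis ℝ Γ
  let L := bΛ.equiv bΓ (Equiv.refl _)
  have hmap : Λ.map (L.restrictScalars ℤ : E →ₗ[ℤ] E) = Γ := by
    rw [← Module.Basis.ofZLatticeBasis_span ℝ Λ, ← Module.Basis.ofZLatticeBasis_span ℝ Γ,
      Submodule.map_span, ← range_comp]
    congr 2
    funext i
    exact bΛ.equiv_apply i bΓ (Equiv.refl _)
  refine ⟨L, fun v => ?_⟩
  rw [← hmap, Submodule.mem_map_equiv]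
  simp

theorem ZLattice.exists_linearEquiv_prod_apply_mem_iff {F W : Type*} [AddCommGroup F]
    [Module ℝ F] [NormedAddCommGroup W] [NormedSpace ℝ W] [FiniteDimensional ℝ W]
    (Λ : Submodule ℤ W) [DiscreteTopology Λ] [IsZLattice ℝ Λ] {Γ : AddSubgroup (F × W)}
    (hle : Γ ≤ (⊥ : AddSubgroup F).prod Λ.toAddSubgroup)
    (hmul : ∀ v ∈ (⊥ : AddSubgroup F).prod Λ.toAddSubgroup, ∃ k : ℕ, 0 < k ∧ k • v ∈ Γ) :
    ∃ L : (F × W) ≃ₗ[ℝ] (F × W),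
      ∀ v, L v ∈ Γ ↔ v ∈ (⊥ : AddSubgroup F).prod Λ.toAddSubgroup := by
  let Γ₂ := Γ.map (AddMonoidHom.snd F W)
  have hmem : ∀ v : F × W, v ∈ Γ ↔ v.1 = 0 ∧ v.2 ∈ Γ₂ := by
    refine fun v => ⟨fun hv => ⟨(hle hv).1, v, hv, rfl⟩, ?_⟩
    rintro ⟨h1, w, hw, h2⟩
    rwa [Prod.ext (h1.trans (hle hw).1.symm) h2.symm]
  obtain ⟨L, hL⟩ : ∃ L : W ≃ₗ[ℝ] W, ∀ w, L w ∈ Γ₂ ↔ w ∈ Λ :=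
    ZLattice.exists_linearEquiv_apply_mem_iff Λ (Γ := Γ₂.toIntSubmodule)
      (by rintro _ ⟨w, hw, rfl⟩; exact (hle hw).2) fun w hw => by
        obtain ⟨k, hk, hkw⟩ := hmul (0, w) ⟨rfl, hw⟩
        exact ⟨k, hk, _, hkw, by simp⟩
  refine ⟨(LinearEquiv.refl ℝ F).prodCongr L, fun v => ?_⟩
  rw [hmem]
  simp [AddSubgroup.mem_prod, hL]

noncomputable def torusProj (n : ℕ) : (Fin n → ℝ) →+ (Fin n → AddCircle (1 : ℝ)) :=
  (QuotientAddGroup.mk' _).compLeft (Fin n)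

theorem isOpenQuotientMap_torusProj (n : ℕ) : IsOpenQuotientMap (torusProj n) :=
  .piMap fun _ => QuotientAddGroup.isOpenQuotientMap_mk

theorem mem_ker_torusProj {n : ℕ} {b : Fin n → ℝ} :
    b ∈ (torusProj n).ker ↔ b ∈ Submodule.span ℤ (range (Pi.basisFun ℝ (Fin n))) := by
  rw [Module.Basis.mem_span_iff_repr_mem ℤ, AddMonoidHom.mem_ker, funext_iff]
  simp [torusProj, AddSubgroup.mem_zmultiples_iff]

noncomputable def torusCover (m n : ℕ) :
    (Fin m → ℝ) × (Fin n → ℝ) →+ (Fin m → ℝ) × (Fin n → AddCircle (1 : ℝ)) :=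
  (AddMonoidHom.id _).prodMap (torusProj n)

theorem isOpenQuotientMap_torusCover (m n : ℕ) : IsOpenQuotientMap (torusCover m n) :=
  IsOpenQuotientMap.id.prodMap (isOpenQuotientMap_torusProj n)

theorem ker_torusCover (m n : ℕ) : (torusCover m n).ker =
    (⊥ : AddSubgroup (Fin m → ℝ)).prod
      (Submodule.span ℤ (range (Pi.basisFun ℝ (Fin n)))).toAddSubgroup := by
  rw [torusCover, AddMonoidHom.ker_prodMap, AddMonoidHom.ker_id]
  congr 1
  ext b
  exact mem_ker_torusProj

theorem isCoveringMap_torusCover (m n : ℕ) : IsCoveringMap (torusCover m n) := by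
  refine ((isOpenQuotientMap_torusCover m n).isQuotientMap
    |>.isAddQuotientCoveringMap_of_isDiscrete_ker_addMonoidHom ?_).isCoveringMap
  have hΛ : IsDiscrete ((Submodule.span ℤ (range (Pi.basisFun ℝ (Fin n))) : Set (Fin n → ℝ))) :=
    isDiscrete_iff_discreteTopology.2 (inferInstanceAs (DiscreteTopology (Submodule.span ℤ _)))
  convert hΛ.image (isInducing_prodMkRight (0 : Fin m → ℝ)) using 1
  ext ⟨a, b⟩
  simp [ker_torusCover, AddSubgroup.mem_prod, and_comm, eq_comm]

/-- Let `m, n ≥ 0`, let `X` be a nonempty connected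
topological space, and let `p : X → ℝ^m × 𝕋^n` be a covering map with finite
fibers, where `𝕋^n = (ℝ/ℤ)^n`.  Then `X` is homeomorphic to `ℝ^m × 𝕋^n`. -/
theorem finite_cover_of_euclidean_times_torus (m n : ℕ) (X : Type*)
    [TopologicalSpace X] [Nonempty X] [ConnectedSpace X]
    (p : X → (Fin m → ℝ) × (Fin n → AddCircle (1 : ℝ)))
    (hp : IsCoveringMap p)
    (hfin : ∀ y : (Fin m → ℝ) × (Fin n → AddCircle (1 : ℝ)),
      (p ⁻¹' {y}).Finite) :
    Nonempty (X ≃ₜ (Fin m → ℝ) × (Fin n → AddCircle (1 : ℝ))) := by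
  obtain ⟨x₀⟩ := ‹Nonempty X›
  have hq := isOpenQuotientMap_torusCover m n
  obtain ⟨v₀, hv₀⟩ := hq.surjective (p x₀)
  obtain ⟨f, -, hpf⟩ :=
    (hp.existsUnique_continuousMap_lifts ⟨_, hq.continuous⟩ v₀ x₀ hv₀.symm).exists
  have hf := hp.isOpenQuotientMap_of_comp_eq (isCoveringMap_torusCover m n) hq.surjective
    f.continuous hpf
  obtain ⟨L, hL⟩ := ZLattice.exists_linearEquiv_prod_apply_mem_iff _
    (ker_torusCover m n ▸ periods_le_ker_of_comp_eq hpf) fun v hv =>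
      hp.exists_nsmul_mem_periods f.continuous hpf (hfin _) (ker_torusCover m n ▸ hv)
  refine (hf.comp L.toContinuousLinearEquiv.toHomeomorph.isOpenQuotientMap).isQuotientMap
    |>.nonempty_homeomorph hq.isQuotientMap fun a b => ?_
  change f (L a) = f (L b) ↔ _
  rw [hp.apply_eq_apply_iff f.continuous hpf, ← map_neg, ← map_add, hL, ← ker_torusCover,
    AddMonoidHom.mem_ker, map_add, map_neg, neg_add_eq_zero]
end
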